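/- arXiv:2008.04243 — 9 statements merged into one kernel-verified Lean document; each statement's English description precedes it below -/
import Mathlib

section
/- For every positive integer n, the number of partitions of n all of whose parts occur with the same multiplicity equals the sum over divisors d of n of the number of partitions of d into distinct parts: Q̂(n) = Σ_{d|n} Q(d); consequently, by Möbius inversion, Q(n) = Σ_{d|n} μ(d) · Q̂(n/d), where μ is the classical Möbius function. -/
/-- `Q n` : the number of partitions of `n` into distinct parts. -/
noncomputable def Q (n : ℕ) : ℕ := Nat.card {p : n.Partition // p.parts.Nodup}

/-- `Qhat n` : the number of partitions of `n` all of whose parts occur with the same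
multiplicity. -/
noncomputable def Qhat (n : ℕ) : ℕ :=
  Nat.card {p : n.Partition //
    ∀ a ∈ p.parts, ∀ b ∈ p.parts, p.parts.count a = p.parts.count b}

private lemma key_rep {n : ℕ} (hn : 1 ≤ n) (p : n.Partition)
    (h : ∀ a ∈ p.parts, ∀ b ∈ p.parts, p.parts.count a = p.parts.count b) :
    ∃ m : ℕ, 0 < m ∧ p.parts = m • p.parts.dedup := by
  have hne : p.parts ≠ 0 := by
    intro h0
    have := p.parts_sum
    rw [h0] at this
    simp at this
    omega
  obtain ⟨a₀, ha₀⟩ := Multiset.exists_mem_of_ne_zero hne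
  refine ⟨p.parts.count a₀, Multiset.count_pos.mpr ha₀, ?_⟩
  ext a
  rw [Multiset.count_nsmul, Multiset.count_dedup]
  by_cases ha : a ∈ p.parts
  · simp [ha, h a ha a₀ ha₀]
  · simp [ha, Multiset.count_eq_zero_of_notMem ha]

private lemma dedup_sum_facts {n : ℕ} (hn : 1 ≤ n) (p : n.Partition)
    (h : ∀ a ∈ p.parts, ∀ b ∈ p.parts, p.parts.count a = p.parts.count b) :
    p.parts.dedup.sum ∣ n ∧ 0 < p.parts.dedup.sum ∧
      p.parts = (n / p.parts.dedup.sum) • p.parts.dedup := by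
  obtain ⟨m, hm, hrep⟩ := key_rep hn p h
  have hsum : n = m * p.parts.dedup.sum := by
    conv_lhs => rw [← p.parts_sum, hrep]
    rw [Multiset.sum_nsmul, smul_eq_mul]
  have hdpos : 0 < p.parts.dedup.sum := by
    rcases Nat.eq_zero_or_pos p.parts.dedup.sum with h0 | h0
    · rw [h0, Nat.mul_zero] at hsum; omega
    · exact h0
  have hdiv : p.parts.dedup.sum ∣ n := ⟨m, hsum.trans (Nat.mul_comm m _)⟩
  have hmval : n / p.parts.dedup.sum = m := Nat.div_eq_of_eq_mul_left hdpos hsum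
  exact ⟨hdiv, hdpos, by rw [hmval]; exact hrep⟩

private def Pprop (n : ℕ) (p : n.Partition) : Prop :=
  ∀ a ∈ p.parts, ∀ b ∈ p.parts, p.parts.count a = p.parts.count b

/-- The partition of `d` given by the deduplicated parts. -/
private def toDistinct {n : ℕ} (hn : 1 ≤ n) (p : {p : n.Partition // Pprop n p}) :
    (p.1.parts.dedup.sum).Partition where
  parts := p.1.parts.dedup
  parts_pos := fun hi => p.1.parts_pos (Multiset.mem_dedup.mp hi)
  parts_sum := rfl

private def fmap {n : ℕ} (hn : 1 ≤ n) (p : {p : n.Partition // Pprop n p}) : n.divisors :=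
  ⟨p.1.parts.dedup.sum, Nat.mem_divisors.mpr ⟨(dedup_sum_facts hn p.1 p.2).1, by omega⟩⟩

/-- The partition of `n` obtained by repeating each part of a partition of `d` exactly `n/d`
times. -/
private def ofDistinct {n : ℕ} (hn : 1 ≤ n) (d : n.divisors)
    (q : {q : (d : ℕ).Partition // q.parts.Nodup}) : n.Partition where
  parts := (n / (d : ℕ)) • q.1.parts
  parts_pos := fun hi => q.1.parts_pos (Multiset.mem_nsmul.mp hi).2
  parts_sum := by
    have hd := Nat.mem_divisors.mp d.2
    rw [Multiset.sum_nsmul, q.1.parts_sum, smul_eq_mul, Nat.div_mul_cancel hd.1]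

private lemma ndiv_pos {n : ℕ} (hn : 1 ≤ n) (d : n.divisors) : 0 < n / (d : ℕ) := by
  have hd := Nat.mem_divisors.mp d.2
  exact Nat.div_pos (Nat.le_of_dvd (by omega) hd.1) (Nat.pos_of_dvd_of_pos hd.1 (by omega))

private lemma ofDistinct_prop {n : ℕ} (hn : 1 ≤ n) (d : n.divisors)
    (q : {q : (d : ℕ).Partition // q.parts.Nodup}) : Pprop n (ofDistinct hn d q) := by
  intro a ha b hb
  have hma := (Multiset.mem_nsmul.mp ha).2
  have hmb := (Multiset.mem_nsmul.mp hb).2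
  show Multiset.count a ((n / (d : ℕ)) • q.1.parts) =
    Multiset.count b ((n / (d : ℕ)) • q.1.parts)
  rw [Multiset.count_nsmul, Multiset.count_nsmul,
    Multiset.count_eq_one_of_mem q.2 hma, Multiset.count_eq_one_of_mem q.2 hmb]

/-- Fiber-wise equivalence. -/
private def fiberEquiv {n : ℕ} (hn : 1 ≤ n) (d : n.divisors) :
    {p : {p : n.Partition // Pprop n p} // fmap hn p = d} ≃
      {q : (d : ℕ).Partition // q.parts.Nodup} where
  toFun p := ⟨⟨p.1.1.parts.dedup, fun hi => p.1.1.parts_pos (Multiset.mem_dedup.mp hi),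
      by rw [← congrArg Subtype.val p.2]; rfl⟩, p.1.1.parts.nodup_dedup⟩
  invFun q := ⟨⟨ofDistinct hn d q, ofDistinct_prop hn d q⟩, by
    apply Subtype.ext
    show ((n / (d : ℕ)) • q.1.parts).dedup.sum = (d : ℕ)
    rw [Multiset.dedup_nsmul (ndiv_pos hn d).ne',
      Multiset.dedup_eq_self.mpr q.2, q.1.parts_sum]⟩
  left_inv := by
    rintro ⟨⟨p, hp⟩, hfp⟩
    apply Subtype.ext
    apply Subtype.ext
    apply Nat.Partition.ext
    show (n / (d : ℕ)) • p.parts.dedup = p.parts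
    have hd : (d : ℕ) = p.parts.dedup.sum := (congrArg Subtype.val hfp).symm
    rw [hd]
    exact (dedup_sum_facts hn p hp).2.2.symm
  right_inv := by
    rintro ⟨q, hq⟩
    apply Subtype.ext
    apply Nat.Partition.ext
    show ((n / (d : ℕ)) • q.parts).dedup = q.parts
    rw [Multiset.dedup_nsmul (ndiv_pos hn d).ne',
      Multiset.dedup_eq_self.mpr hq]

private lemma Qhat_eq_sum (n : ℕ) (hn : 1 ≤ n) : Qhat n = ∑ d ∈ n.divisors, Q d := by
  have e : {p : n.Partition // Pprop n p} ≃
      Σ d : n.divisors, {q : (d : ℕ).Partition // q.parts.Nodup} :=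
    (Equiv.sigmaFiberEquiv (fmap hn)).symm.trans
      (Equiv.sigmaCongrRight (fiberEquiv hn))
  have h1 : Qhat n = Nat.card (Σ d : n.divisors, {q : (d : ℕ).Partition // q.parts.Nodup}) :=
    Nat.card_congr e
  rw [h1, Nat.card_eq_fintype_card, Fintype.card_sigma]
  rw [← Finset.sum_coe_sort n.divisors Q]
  congr 1
  funext d
  rw [Q, Nat.card_eq_fintype_card]

theorem stmt0 (n : ℕ) (hn : 1 ≤ n) :
    (Qhat n = ∑ d ∈ n.divisors, Q d) ∧
    ((Q n : ℤ) = ∑ d ∈ n.divisors, ArithmeticFunction.moebius d * (Qhat (n / d) : ℤ)) := by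
  constructor
  · exact Qhat_eq_sum n hn
  · have h := (ArithmeticFunction.sum_eq_iff_sum_mul_moebius_eq
      (f := fun d => (Q d : ℤ)) (g := fun d => (Qhat d : ℤ))).mp
      (fun m hm => by
        rw [Qhat_eq_sum m hm]
        push_cast
        rfl) n (by omega)
    rw [← Nat.sum_divisorsAntidiagonal
      (fun a b => ((ArithmeticFunction.moebius a : ℤ) : ℤ) * (Qhat b : ℤ))]
    exact h.symm
end

section
/- For every partition λ, the sum of the partition Möbius function over the sub-partitions of λ satisfies Σ_{δ|λ} μ_P(δ) = 1 if λ = ∅, and Σ_{δ|λ} μ_P(δ) = 0 otherwise. -/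
/-- The partition-theoretic Möbius function on partitions (finite multisets of positive
integers): `μ_P(λ) = 0` if `λ` has a repeated part, and `(-1)^{ℓ(λ)}` otherwise
(in particular `μ_P(∅) = 1`). -/
def muP (l : Multiset ℕ+) : ℤ :=
  if l.Nodup then (-1) ^ (Multiset.card l) else 0

lemma filter_eq_image (l : Multiset ℕ+) :
    l.powerset.toFinset.filter Multiset.Nodup
      = l.toFinset.powerset.image Finset.val := by
  ext d
  simp only [Finset.mem_filter, Multiset.mem_toFinset, Multiset.mem_powerset,
    Finset.mem_image, Finset.mem_powerset]
  constructor
  · rintro ⟨hle, hnd⟩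
    refine ⟨⟨d, hnd⟩, ?_, rfl⟩
    intro a ha
    simp only [Multiset.mem_toFinset] at *
    exact Multiset.mem_of_le hle (by simpa using ha)
  · rintro ⟨s, hs, rfl⟩
    refine ⟨?_, s.nodup⟩
    rw [Multiset.le_iff_subset s.nodup]
    intro a ha
    have := hs (by simpa using ha)
    simpa using this
/-- Summing `μ_P` over all distinct sub-multisets `δ` of a partition `λ` gives `1` if
`λ = ∅` and `0` otherwise. -/
theorem stmt2 (l : Multiset ℕ+) :
    (∑ d ∈ l.powerset.toFinset, muP d) = if l = 0 then 1 else 0 := by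
  have h1 : (∑ d ∈ l.powerset.toFinset, muP d)
      = ∑ d ∈ l.powerset.toFinset.filter Multiset.Nodup, (-1 : ℤ) ^ (Multiset.card d) := by
    rw [Finset.sum_filter]
    simp [muP]
  rw [h1, filter_eq_image, Finset.sum_image (fun a _ b _ h => Finset.val_injective h)]
  have : ∀ s ∈ l.toFinset.powerset, ((-1 : ℤ) ^ (Multiset.card s.val)) = (-1) ^ s.card :=
    fun s _ => rfl
  rw [Finset.sum_congr rfl this, Finset.sum_powerset_neg_one_pow_card]
  simp [Multiset.toFinset_eq_empty]
end

section
/- Partition-theoretic Möbius inversion: let f be a complex-valued function on partitions and define F(λ) := Σ_{δ|λ} f(δ). Then for every partition λ, f(λ) = Σ_{δ|λ} F(δ) · μ_P(λ/δ). -/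

lemma mem_pow_toFinset {m d : Multiset ℕ+} :
    d ∈ m.powerset.toFinset ↔ d ≤ m := by
  simp [Multiset.mem_powerset]

lemma sum_muP (m : Multiset ℕ+) :
    ∑ d ∈ m.powerset.toFinset, (muP d : ℂ) = if m = 0 then 1 else 0 := by
  classical
  have h1 : ∑ d ∈ m.powerset.toFinset, (muP d : ℂ)
      = ∑ d ∈ m.powerset.toFinset.filter (fun d => d.Nodup), (muP d : ℂ) := by
    rw [Finset.sum_filter_of_ne]
    intro d _ hd
    by_contra hnd
    exact hd (by simp [muP, hnd])
  rw [h1]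
  have h2 : ∑ d ∈ m.powerset.toFinset.filter (fun d => d.Nodup), (muP d : ℂ)
      = ∑ t ∈ m.toFinset.powerset, ((-1 : ℤ) ^ t.card : ℂ) := by
    refine Finset.sum_nbij' (fun d => d.toFinset) (fun t => t.val) ?_ ?_ ?_ ?_ ?_
    · intro d hd
      simp only [Finset.mem_filter, mem_pow_toFinset] at hd
      rw [Finset.mem_powerset]
      intro x hx
      rw [Multiset.mem_toFinset] at hx ⊢
      exact Multiset.subset_of_le hd.1 hx
    · intro t ht
      rw [Finset.mem_powerset] at ht
      simp only [Finset.mem_filter, mem_pow_toFinset]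
      refine ⟨(Multiset.le_iff_subset t.nodup).2 ?_, t.nodup⟩
      intro x hx
      have := ht (Finset.mem_def.2 hx)
      rwa [Multiset.mem_toFinset] at this
    · intro d hd
      simp only [Finset.mem_filter] at hd
      show d.toFinset.val = d
      rw [Multiset.toFinset_val, hd.2.dedup]
    · intro t ht
      exact t.val_toFinset
    · intro d hd
      simp only [Finset.mem_filter] at hd
      rw [muP, if_pos hd.2, Multiset.toFinset_card_of_nodup hd.2]
      push_cast
      ring
  rw [h2]
  have h4 : ((∑ t ∈ m.toFinset.powerset, (-1:ℤ)^t.card : ℤ) : ℂ)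
      = ∑ t ∈ m.toFinset.powerset, ((-1:ℤ):ℂ)^t.card := by push_cast; rfl
  rw [← h4, Finset.sum_powerset_neg_one_pow_card]
  by_cases h : m = 0 <;> simp [h, Multiset.toFinset_eq_empty]

/-- Partition-theoretic Möbius inversion: if `F(λ) = Σ_{δ|λ} f(δ)` (sum over distinct
sub-multisets), then `f(λ) = Σ_{δ|λ} F(δ) μ_P(λ/δ)`, where `λ/δ` is multiset difference. -/
theorem stmt3 (f F : Multiset ℕ+ → ℂ)
    (hF : ∀ l, F l = ∑ d ∈ l.powerset.toFinset, f d)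
    (l : Multiset ℕ+) :
    f l = ∑ d ∈ l.powerset.toFinset, F d * (muP (l - d) : ℂ) := by
  classical
  have key : ∀ e : Multiset ℕ+, e ≤ l →
      ∑ d ∈ l.powerset.toFinset.filter (fun d => e ≤ d), (muP (l - d) : ℂ)
      = if e = l then 1 else 0 := by
    intro e he
    have hb : ∑ d ∈ l.powerset.toFinset.filter (fun d => e ≤ d), (muP (l - d) : ℂ)
        = ∑ c ∈ (l - e).powerset.toFinset, (muP ((l - e) - c) : ℂ) := by
      refine Finset.sum_nbij' (fun d => d - e) (fun c => e + c) ?_ ?_ ?_ ?_ ?_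
      · intro d hd
        simp only [Finset.mem_filter, mem_pow_toFinset] at hd ⊢
        exact tsub_le_tsub_right hd.1 e
      · intro c hc
        simp only [Finset.mem_filter, mem_pow_toFinset] at hc ⊢
        refine ⟨?_, le_add_right le_rfl⟩
        calc e + c ≤ e + (l - e) := add_le_add_right hc e
          _ = l := add_tsub_cancel_of_le he
      · intro d hd
        simp only [Finset.mem_filter, mem_pow_toFinset] at hd
        exact add_tsub_cancel_of_le hd.2
      · intro c _
        exact add_tsub_cancel_left e c
      · intro d hd
        simp only [Finset.mem_filter, mem_pow_toFinset] at hd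
        congr 2
        rw [tsub_tsub, add_tsub_cancel_of_le hd.2]
    have hcmp : ∑ c ∈ (l - e).powerset.toFinset, (muP ((l - e) - c) : ℂ)
        = ∑ c ∈ (l - e).powerset.toFinset, (muP c : ℂ) := by
      refine Finset.sum_nbij' (fun c => (l - e) - c) (fun c => (l - e) - c) ?_ ?_ ?_ ?_ ?_
      · intro c _; exact mem_pow_toFinset.2 tsub_le_self
      · intro c _; exact mem_pow_toFinset.2 tsub_le_self
      · intro c hc; exact tsub_tsub_cancel_of_le (mem_pow_toFinset.1 hc)
      · intro c hc; exact tsub_tsub_cancel_of_le (mem_pow_toFinset.1 hc)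
      · intro c _; rfl
    rw [hb, hcmp, sum_muP]
    have : l - e = 0 ↔ e = l := by
      rw [tsub_eq_zero_iff_le]
      exact ⟨fun h => le_antisymm he h, fun h => h ▸ le_rfl⟩
    by_cases h : e = l <;> simp [h, this]
  have step1 : ∑ d ∈ l.powerset.toFinset, F d * (muP (l - d) : ℂ)
      = ∑ d ∈ l.powerset.toFinset, ∑ e ∈ d.powerset.toFinset, f e * (muP (l - d) : ℂ) := by
    simp only [hF, Finset.sum_mul]
  have step2 : ∑ d ∈ l.powerset.toFinset, ∑ e ∈ d.powerset.toFinset, f e * (muP (l - d) : ℂ)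
      = ∑ e ∈ l.powerset.toFinset,
          ∑ d ∈ l.powerset.toFinset.filter (fun d => e ≤ d), f e * (muP (l - d) : ℂ) := by
    refine Finset.sum_comm' ?_
    intro d e
    simp only [Finset.mem_filter, mem_pow_toFinset]
    constructor
    · rintro ⟨h1, h2⟩; exact ⟨⟨h1, h2⟩, le_trans h2 h1⟩
    · rintro ⟨⟨h1, h2⟩, _⟩; exact ⟨h1, h2⟩
  rw [step1, step2]
  have step3 : ∀ e ∈ l.powerset.toFinset,
      ∑ d ∈ l.powerset.toFinset.filter (fun d => e ≤ d), f e * (muP (l - d) : ℂ)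
      = f e * (if e = l then 1 else 0) := by
    intro e he
    rw [← Finset.mul_sum, key e (mem_pow_toFinset.1 he)]
  rw [Finset.sum_congr rfl step3]
  simp [Finset.sum_ite_eq' l.powerset.toFinset l (fun e => f e), mem_pow_toFinset.2 le_rfl]
end

section
/- For every partition λ, Σ_{δ|λ} φ_P(δ) = n_λ, where the sum runs over all distinct sub-multisets δ of λ and the equality holds in the rational numbers. -/
/-- The norm of a partition (a finite multiset of positive integers): the product of its
parts, with `n_∅ = 1`. -/
def normP (l : Multiset ℕ+) : ℕ := (l.map (fun p : ℕ+ => (p : ℕ))).prod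

/-- The partition-theoretic phi function:
`φ_P(λ) = n_λ · Π (1 - 1/k)`, the product over the distinct values `k` occurring as parts
of `λ`; in particular `φ_P(∅) = 1`. -/
def phiP (l : Multiset ℕ+) : ℚ :=
  (normP l : ℚ) * ∏ k ∈ l.toFinset, (1 - ((k : ℕ) : ℚ)⁻¹)

lemma normP_add (a b : Multiset ℕ+) : normP (a + b) = normP a * normP b := by
  simp [normP]

lemma normP_replicate (j : ℕ) (k : ℕ+) :
    normP (Multiset.replicate j k) = (k : ℕ) ^ j := by
  simp [normP, Multiset.map_replicate, Multiset.prod_replicate]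

lemma phiP_rep_add (j : ℕ) (hj : j ≠ 0) (k : ℕ+) (d : Multiset ℕ+) (hk : k ∉ d) :
    phiP (Multiset.replicate j k + d)
      = ((k : ℕ) : ℚ) ^ j * (1 - ((k : ℕ) : ℚ)⁻¹) * phiP d := by
  unfold phiP
  rw [normP_add, normP_replicate, Multiset.toFinset_add,
    Multiset.toFinset_replicate j k, if_neg hj,
    ← Finset.insert_eq,
    Finset.prod_insert (by simpa using hk)]
  push_cast
  ring

/-- `Σ_{δ|λ} φ_P(δ) = n_λ`, summing over all distinct sub-multisets of `λ`. -/
theorem stmt4 (l : Multiset ℕ+) :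
    (∑ d ∈ l.powerset.toFinset, phiP d) = (normP l : ℚ) := by
  induction l using Multiset.strongInductionOn with
  | ih l IH =>
  rcases Multiset.empty_or_exists_mem l with rfl | ⟨k, hk⟩
  · simp [phiP, normP]
  · set m := l.count k with hm
    set t := l.filter (· ≠ k) with ht
    have hkt : k ∉ t := by simp [ht]
    have hl : Multiset.replicate m k + t = l := by
      rw [hm, ht, ← Multiset.filter_eq']
      exact Multiset.filter_add_not _ l
    have htl : t < l := by
      refine lt_of_le_of_ne (Multiset.filter_le _ l) ?_
      intro h
      exact hkt (h ▸ hk)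
    -- reindex the sum
    have hbij : (∑ d ∈ l.powerset.toFinset, phiP d)
        = ∑ p ∈ (Finset.range (m + 1)) ×ˢ t.powerset.toFinset,
            phiP (Multiset.replicate p.1 k + p.2) := by
      refine Finset.sum_nbij' (fun d => ((d.count k, d.filter (· ≠ k)) : ℕ × Multiset ℕ+))
        (fun p => Multiset.replicate p.1 k + p.2) ?_ ?_ ?_ ?_ ?_
      · intro d hd
        rw [Multiset.mem_toFinset, Multiset.mem_powerset] at hd
        rw [Finset.mem_product, Finset.mem_range, Multiset.mem_toFinset,
          Multiset.mem_powerset]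
        constructor
        · have := Multiset.count_le_of_le k hd
          omega
        · exact ht ▸ Multiset.filter_le_filter _ hd
      · rintro ⟨j, d⟩ hp
        rw [Finset.mem_product, Finset.mem_range, Multiset.mem_toFinset,
          Multiset.mem_powerset] at hp
        dsimp only
        rw [Multiset.mem_toFinset, Multiset.mem_powerset, ← hl]
        exact add_le_add ((Multiset.replicate_le_replicate k).2 (by omega)) hp.2
      · intro d _
        simp only [← Multiset.filter_eq' d k]
        exact Multiset.filter_add_not _ d
      · rintro ⟨j, d⟩ hp
        rw [Finset.mem_product, Finset.mem_range, Multiset.mem_toFinset,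
          Multiset.mem_powerset] at hp
        have hkd : k ∉ d := fun h => hkt (Multiset.mem_of_le hp.2 h)
        have h1 : (Multiset.replicate j k + d).count k = j := by
          rw [Multiset.count_add, Multiset.count_replicate_self,
            Multiset.count_eq_zero.2 hkd, add_zero]
        have h2 : (Multiset.replicate j k + d).filter (· ≠ k) = d := by
          rw [Multiset.filter_add, Multiset.filter_eq_nil.2 (by
            intro a ha
            simp [Multiset.eq_of_mem_replicate ha]),
            Multiset.filter_eq_self.2 (by
              intro a ha hak
              exact hkd (hak ▸ ha))]
          simp
        simp [h1, h2]
      · intro d _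
        simp only [← Multiset.filter_eq' d k]
        rw [Multiset.filter_add_not _ d]
    rw [hbij, Finset.sum_product, Finset.sum_range_succ']
    have hIH : (∑ d ∈ t.powerset.toFinset, phiP d) = (normP t : ℚ) := IH t htl
    have hzero : (∑ d ∈ t.powerset.toFinset, phiP (Multiset.replicate 0 k + d))
        = (normP t : ℚ) := by
      simpa using hIH
    have hK : ((k : ℕ) : ℚ) ≠ 0 := by positivity
    have hstep : ∀ j : ℕ,
        (∑ d ∈ t.powerset.toFinset, phiP (Multiset.replicate (j + 1) k + d))
          = (((k : ℕ) : ℚ) ^ (j + 1) - ((k : ℕ) : ℚ) ^ j) * (normP t : ℚ) := by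
      intro j
      have : ∀ d ∈ t.powerset.toFinset,
          phiP (Multiset.replicate (j + 1) k + d)
            = ((k : ℕ) : ℚ) ^ (j + 1) * (1 - ((k : ℕ) : ℚ)⁻¹) * phiP d := by
        intro d hd
        rw [Multiset.mem_toFinset, Multiset.mem_powerset] at hd
        exact phiP_rep_add (j + 1) (by omega) k d (fun h => hkt (Multiset.mem_of_le hd h))
      rw [Finset.sum_congr rfl this, ← Finset.mul_sum, hIH]
      field_simp
      ring
    rw [Finset.sum_congr rfl (fun j _ => hstep j), hzero, ← Finset.sum_mul,
      Finset.sum_range_sub (fun j => ((k : ℕ) : ℚ) ^ j)]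
    rw [← hl, normP_add, normP_replicate]
    push_cast
    ring
end

section
/- For every integer m ≥ 2, the partition zeta value Σ_{λ ∈ P_{mℤ}} n_λ^{−2} = π / ( m · sin(π/m) ), where the sum runs over all partitions (including the empty partition) all of whose parts are positive multiples of m, and the series converges. -/
open scoped ENNReal NNReal
open Finset Real

lemma tsum_pi_prod : ∀ (ι : Type) (_ : Fintype ι) (r : ι → ℝ≥0∞),
    ∑' g : ι → ℕ, ∏ i, r i ^ g i = ∏ i, ∑' k : ℕ, r i ^ k := by
  refine fun ι inst => @Fintype.induction_empty_option
    (fun α _ => ∀ r : α → ℝ≥0∞, ∑' g : α → ℕ, ∏ i, r i ^ g i = ∏ i, ∑' k : ℕ, r i ^ k)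
    ?_ ?_ ?_ ι inst
  · intro α β _ e H r
    letI : Fintype α := Fintype.ofEquiv β e.symm
    have h1 : ∑' g : β → ℕ, ∏ i, r i ^ g i
        = ∑' h : α → ℕ, ∏ i, r i ^ (e.arrowCongr (Equiv.refl ℕ) h) i := by
      exact (Equiv.tsum_eq (e.arrowCongr (Equiv.refl ℕ)) _).symm
    rw [h1]
    have h2 : ∀ h : α → ℕ, ∏ i, r i ^ (e.arrowCongr (Equiv.refl ℕ) h) i
        = ∏ j, r (e j) ^ h j := by
      intro h
      rw [← Equiv.prod_comp e]
      congr 1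
      funext j
      simp [Equiv.arrowCongr]
    simp_rw [h2]
    rw [← Equiv.prod_comp e (fun i => ∑' k : ℕ, r i ^ k)]
    exact H _
  · intro r
    have h1 : ∀ g : PEmpty → ℕ, ∏ i, r i ^ g i = (1 : ℝ≥0∞) := by
      intro g; simp
    simp_rw [h1]
    rw [tsum_eq_single (fun x => x.elim) (by intro b hb; exact absurd (Subsingleton.elim _ _) hb)]
    simp
  · intro α _ H r
    have h1 : ∑' g : Option α → ℕ, ∏ i, r i ^ g i
        = ∑' p : ℕ × (α → ℕ), ∏ i, r i ^ ((Equiv.piOptionEquivProd (β := fun _ => ℕ)).symm p) i :=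
      (Equiv.tsum_eq (Equiv.piOptionEquivProd (β := fun _ => ℕ)).symm _).symm
    rw [h1, ENNReal.tsum_prod']
    have h2 : ∀ (k : ℕ) (h : α → ℕ),
        ∏ i, r i ^ ((Equiv.piOptionEquivProd (β := fun _ => ℕ)).symm (k, h)) i
        = r none ^ k * ∏ a, r (some a) ^ h a := by
      intro k h
      rw [Fintype.prod_option]
      simp [Equiv.piOptionEquivProd]
    simp_rw [h2, ENNReal.tsum_mul_left, ENNReal.tsum_mul_right]
    rw [H (fun a => r (some a)), Fintype.prod_option]

lemma tsum_support_subset (r : ℕ → ℝ≥0∞) (s : Finset ℕ) :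
    ∑' f : {f : ℕ →₀ ℕ // ↑f.support ⊆ (s : Set ℕ)}, ∏ i ∈ f.1.support, r i ^ f.1 i
      = ∏ i ∈ s, ∑' k : ℕ, r i ^ k := by
  have hterm : ∀ f : {f : ℕ →₀ ℕ // ↑f.support ⊆ (s : Set ℕ)},
      ∏ i ∈ f.1.support, r i ^ f.1 i = ∏ i ∈ s, r i ^ f.1 i := by
    intro f
    refine Finset.prod_subset ?_ ?_
    · exact fun x hx => by exact_mod_cast f.2 hx
    · intro x _ hx
      rw [Finsupp.notMem_support_iff.mp hx, pow_zero]
  simp_rw [hterm]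
  set E : {f : ℕ →₀ ℕ // ↑f.support ⊆ (s : Set ℕ)} ≃ (↥s → ℕ) :=
    (Finsupp.restrictSupportEquiv (s : Set ℕ) ℕ).trans Finsupp.equivFunOnFinite with hE
  have happ : ∀ (f : {f : ℕ →₀ ℕ // ↑f.support ⊆ (s : Set ℕ)}) (i : ↥s), E f i = f.1 i := by
    intro f i
    rfl
  have h2 : ∀ f : {f : ℕ →₀ ℕ // ↑f.support ⊆ (s : Set ℕ)},
      ∏ i ∈ s, r i ^ f.1 i = ∏ i : ↥s, r (i : ℕ) ^ (E f) i := by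
    intro f
    rw [Finset.prod_coe_sort s (fun i => r i ^ f.1 i) |>.symm]
    exact Finset.prod_congr rfl fun i _ => by rw [happ]
  simp_rw [h2]
  rw [Equiv.tsum_eq E (fun g : ↥s → ℕ => ∏ i : ↥s, r (i : ℕ) ^ g i),
    tsum_pi_prod _ inferInstance]
  exact Finset.prod_coe_sort s (fun i => ∑' k : ℕ, r i ^ k)

lemma tsum_finsupp_eq_iSup (r : ℕ → ℝ≥0∞) :
    ∑' f : ℕ →₀ ℕ, ∏ i ∈ f.support, r i ^ f i
      = ⨆ s : Finset ℕ, ∏ i ∈ s, ∑' k : ℕ, r i ^ k := by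
  refine le_antisymm ?_ ?_
  · rw [ENNReal.tsum_eq_iSup_sum]
    refine iSup_le fun F => ?_
    set s : Finset ℕ := F.sup Finsupp.support with hs
    have hF : ∀ f ∈ F, ↑f.support ⊆ (s : Set ℕ) := by
      intro f hf
      exact_mod_cast Finset.coe_subset.mpr (Finset.le_sup (f := Finsupp.support) hf)
    calc ∑ f ∈ F, ∏ i ∈ f.support, r i ^ f i
        = ∑ x ∈ F.attach, ∏ i ∈ (x.1).support, r i ^ x.1 i := (Finset.sum_attach F _).symm
      _ = ∑ y ∈ F.attach.image (fun x : {x // x ∈ F} =>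
            (⟨x.1, hF x.1 x.2⟩ : {f : ℕ →₀ ℕ // ↑f.support ⊆ (s : Set ℕ)})),
            ∏ i ∈ (y.1).support, r i ^ y.1 i := by
          rw [Finset.sum_image]
          intro x _ y _ h
          exact Subtype.ext (congrArg (fun z : {f : ℕ →₀ ℕ // ↑f.support ⊆ (s : Set ℕ)} => z.1) h)
      _ ≤ ∑' f : {f : ℕ →₀ ℕ // ↑f.support ⊆ (s : Set ℕ)}, ∏ i ∈ f.1.support, r i ^ f.1 i :=
          ENNReal.sum_le_tsum _
      _ = ∏ i ∈ s, ∑' k : ℕ, r i ^ k := tsum_support_subset r s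
      _ ≤ ⨆ s : Finset ℕ, ∏ i ∈ s, ∑' k : ℕ, r i ^ k := le_iSup (fun s : Finset ℕ => ∏ i ∈ s, ∑' k : ℕ, r i ^ k) s
  · refine iSup_le fun s => ?_
    rw [← tsum_support_subset r s]
    exact ENNReal.tsum_comp_le_tsum_of_injective Subtype.val_injective
      (fun f : ℕ →₀ ℕ => ∏ i ∈ f.support, r i ^ f i)

lemma eval_iSup (m : ℕ) (hm : 2 ≤ m) :
    ⨆ s : Finset ℕ, ∏ i ∈ s, ∑' k : ℕ,
        (ENNReal.ofReal ((((i : ℝ) + 1) * m) ^ 2)⁻¹) ^ k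
      = ENNReal.ofReal (π / (m * Real.sin (π / m))) := by
  set x : ℝ := (m : ℝ)⁻¹ with hx
  have hm0 : (0 : ℝ) < m := by positivity
  have hm2 : (2 : ℝ) ≤ m := by exact_mod_cast hm
  set c : ℕ → ℝ := fun i => 1 - x ^ 2 / ((i : ℝ) + 1) ^ 2 with hc
  have hcpos : ∀ i, 0 < c i := by
    intro i
    have h1 : (1 : ℝ) ≤ ((i : ℝ) + 1) ^ 2 := by
      have h0 : (0 : ℝ) ≤ (i : ℝ) := Nat.cast_nonneg i
      nlinarith
    have hx2 : x ^ 2 ≤ (1 / 2 : ℝ) ^ 2 := by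
      have hxle : x ≤ 1 / 2 := by
        rw [hx]
        rw [inv_le_comm₀ hm0 (by norm_num)]
        linarith
      have hx0 : 0 ≤ x := by positivity
      nlinarith
    have : x ^ 2 / ((i : ℝ) + 1) ^ 2 ≤ x ^ 2 := div_le_self (by positivity) h1
    simp only [hc]
    nlinarith
  set S : ℕ → ℝ≥0∞ := fun i => ∑' k : ℕ,
      (ENNReal.ofReal ((((i : ℝ) + 1) * m) ^ 2)⁻¹) ^ k with hS
  have hSeq : ∀ i, S i = ENNReal.ofReal (c i)⁻¹ := by
    intro i
    simp only [hS]
    rw [ENNReal.tsum_geometric]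
    have h1 : (1 : ℝ≥0∞) - ENNReal.ofReal ((((i : ℝ) + 1) * m) ^ 2)⁻¹
        = ENNReal.ofReal (c i) := by
      rw [← ENNReal.ofReal_one, ← ENNReal.ofReal_sub _ (by positivity)]
      congr 1
      simp only [hc, hx]
      have h2 : ((i : ℝ) + 1) ≠ 0 := by positivity
      field_simp
    rw [h1, ← ENNReal.ofReal_inv_of_pos (hcpos i)]
  have hS1 : ∀ i, (1 : ℝ≥0∞) ≤ S i := by
    intro i
    simp only [hS]
    exact le_trans (le_of_eq (pow_zero _).symm) (ENNReal.le_tsum 0)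
  -- reduce iSup over finsets to iSup over ranges
  have hstep1 : ⨆ s : Finset ℕ, ∏ i ∈ s, S i = ⨆ n : ℕ, ∏ i ∈ Finset.range n, S i := by
    refine le_antisymm (iSup_le fun s => ?_) (iSup_le fun n => le_iSup (fun s : Finset ℕ => ∏ i ∈ s, S i) (Finset.range n))
    obtain ⟨n, hn⟩ := s.exists_nat_subset_range
    exact le_trans (Finset.prod_le_prod_of_subset_of_one_le' hn (fun i _ _ => hS1 i))
      (le_iSup (fun n => ∏ i ∈ Finset.range n, S i) n)
  rw [hstep1]
  -- limit of partial products
  have hmono : Monotone (fun n => ∏ i ∈ Finset.range n, S i) := by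
    refine monotone_nat_of_le_succ fun n => ?_
    rw [Finset.prod_range_succ]
    exact le_mul_of_one_le_right' (hS1 n)
  have hQ := Real.tendsto_euler_sin_prod x
  have hprodpos : ∀ n, 0 < ∏ i ∈ Finset.range n, c i :=
    fun n => Finset.prod_pos fun i _ => hcpos i
  have hpix : 0 < π * x := by positivity
  have hsin : 0 < Real.sin (π * x) := by
    apply Real.sin_pos_of_pos_of_lt_pi
    · positivity
    · calc π * x < π * 1 := by
            apply mul_lt_mul_of_pos_left _ Real.pi_pos
            rw [hx, inv_lt_one_iff₀]
            right; linarith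
        _ = π := mul_one π
  have hPn : ∀ n, ∏ i ∈ Finset.range n, S i
      = ENNReal.ofReal (π * x / (π * x * ∏ i ∈ Finset.range n, c i)) := by
    intro n
    simp_rw [hSeq]
    rw [← ENNReal.ofReal_prod_of_nonneg (fun i _ => (inv_nonneg.mpr (hcpos i).le))]
    congr 1
    rw [Finset.prod_inv_distrib, eq_div_iff (ne_of_gt (mul_pos hpix (hprodpos n)))]
    rw [mul_comm]
    exact mul_inv_cancel_right₀ (ne_of_gt (hprodpos n)) _
  simp_rw [hPn]
  have htend : Filter.Tendsto
      (fun n => ENNReal.ofReal (π * x / (π * x * ∏ i ∈ Finset.range n, c i)))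
      Filter.atTop (nhds (ENNReal.ofReal (π * x / Real.sin (π * x)))) := by
    apply (ENNReal.continuous_ofReal.tendsto _).comp
    exact Filter.Tendsto.div tendsto_const_nhds hQ (ne_of_gt hsin)
  have hmono' : Monotone (fun n => ENNReal.ofReal (π * x / (π * x * ∏ i ∈ Finset.range n, c i))) := by
    intro a b hab
    have := hmono hab
    simpa [hPn] using this
  rw [tendsto_nhds_unique (tendsto_atTop_iSup hmono') htend]
  congr 1
  rw [hx, ← div_eq_mul_inv, div_div]

lemma multiset_prod_ofReal (m : ℕ) (hm : 2 ≤ m) (l : Multiset ℕ) :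
    ENNReal.ofReal ((((l.map (fun j => (j + 1) * m)).prod : ℕ) : ℝ) ^ 2)⁻¹
      = (l.map (fun i : ℕ => ENNReal.ofReal ((((i : ℝ) + 1) * m) ^ 2)⁻¹)).prod := by
  have hm0 : (0 : ℝ) < m := by positivity
  induction l using Multiset.induction with
  | empty => simp
  | cons a l ih =>
    simp only [Multiset.map_cons, Multiset.prod_cons]
    rw [← ih]
    have hP : (0 : ℝ) < (((l.map (fun j => (j + 1) * m)).prod : ℕ) : ℝ) := by
      have : 0 < (l.map (fun j => (j + 1) * m)).prod := by
        apply Multiset.prod_pos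
        intro x hx
        obtain ⟨j, _, rfl⟩ := Multiset.mem_map.mp hx
        positivity
      exact_mod_cast this
    set P : ℝ := (((l.map (fun j => (j + 1) * m)).prod : ℕ) : ℝ) with hPdef
    have hcast : (((a + 1) * m * (l.map (fun j => (j + 1) * m)).prod : ℕ) : ℝ)
        = (((a : ℝ) + 1) * m) * P := by
      rw [Nat.cast_mul, ← hPdef]
      push_cast
      ring
    rw [hcast, mul_pow, mul_inv, ENNReal.ofReal_mul (by positivity)]


/-- For every `m ≥ 2`, summing `n_λ^{-2}` over all partitions all of whose parts are
positive multiples of `m` (including the empty partition) gives `π / (m sin(π/m))`,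
with the series converging. -/
theorem stmt9 (m : ℕ) (hm : 2 ≤ m) :
    HasSum
      (fun l : {l : Multiset ℕ+ // ∀ x ∈ l, m ∣ (x : ℕ)} => ((normP l.1 : ℝ) ^ 2)⁻¹)
      (Real.pi / (m * Real.sin (Real.pi / m))) := by
  have hm0 : 0 < m := by omega
  have hsin : 0 < Real.sin (π / m) := by
    apply Real.sin_pos_of_pos_of_lt_pi
    · positivity
    · apply div_lt_self Real.pi_pos
      exact_mod_cast (by omega : 1 < m)
  set T : ℝ := π / (m * Real.sin (π / m)) with hT
  have hT0 : 0 ≤ T :=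
    le_of_lt (div_pos Real.pi_pos (mul_pos (by positivity) hsin))
  have hu : ∀ j : ℕ, 0 < (j + 1) * m := fun j => by positivity
  set u : ℕ → ℕ+ := fun j => ⟨(j + 1) * m, hu j⟩ with hudef
  let e : Multiset ℕ ≃ {l : Multiset ℕ+ // ∀ x ∈ l, m ∣ (x : ℕ)} :=
  { toFun := fun l => ⟨l.map u, by
      intro x hx
      obtain ⟨j, _, rfl⟩ := Multiset.mem_map.mp hx
      exact dvd_mul_left m (j + 1)⟩
    invFun := fun L => L.1.map (fun x : ℕ+ => (x : ℕ) / m - 1)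
    left_inv := by
      intro l
      simp only [Multiset.map_map]
      have h : ∀ j ∈ l, ((fun x : ℕ+ => (x : ℕ) / m - 1) ∘ u) j = j := by
        intro j _
        show ((j + 1) * m) / m - 1 = j
        rw [Nat.mul_div_cancel _ hm0]
        omega
      rw [Multiset.map_congr rfl h, Multiset.map_id']
    right_inv := by
      intro L
      apply Subtype.ext
      simp only [Multiset.map_map]
      have h : ∀ x ∈ L.1, (u ∘ (fun x : ℕ+ => (x : ℕ) / m - 1)) x = x := by
        intro x hx
        have hdvd := L.2 x hx
        have hxpos := x.2
        apply PNat.coe_injective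
        show ((x : ℕ) / m - 1 + 1) * m = (x : ℕ)
        have h1 : m ≤ (x : ℕ) := Nat.le_of_dvd hxpos hdvd
        have h2 : 1 ≤ (x : ℕ) / m := (Nat.one_le_div_iff hm0).mpr h1
        have h3 : (x : ℕ) / m - 1 + 1 = (x : ℕ) / m := by omega
        rw [h3, Nat.div_mul_cancel hdvd]
      rw [Multiset.map_congr rfl h, Multiset.map_id'] }
  have hnorm : ∀ l : Multiset ℕ, normP ((e l).1) = (l.map (fun j => (j + 1) * m)).prod := by
    intro l
    simp only [normP, e, Equiv.coe_fn_mk, Multiset.map_map]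
    rfl
  have key : ∑' l : {l : Multiset ℕ+ // ∀ x ∈ l, m ∣ (x : ℕ)},
      ENNReal.ofReal (((normP l.1 : ℝ) ^ 2)⁻¹) = ENNReal.ofReal T := by
    rw [← Equiv.tsum_eq e (fun l : {l : Multiset ℕ+ // ∀ x ∈ l, m ∣ (x : ℕ)} =>
      ENNReal.ofReal (((normP l.1 : ℝ) ^ 2)⁻¹))]
    have hpt : ∀ l : Multiset ℕ, ENNReal.ofReal (((normP ((e l).1) : ℝ) ^ 2)⁻¹)
        = ∏ i ∈ (Multiset.toFinsupp l).support,
            (ENNReal.ofReal ((((i : ℝ) + 1) * m) ^ 2)⁻¹) ^ (Multiset.toFinsupp l) i := by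
      intro l
      rw [hnorm, multiset_prod_ofReal m hm]
      rw [Finset.prod_multiset_map_count]
      rfl
    simp_rw [hpt]
    refine Eq.trans (Equiv.tsum_eq (Multiset.toFinsupp (α := ℕ)).toEquiv
      (fun f : ℕ →₀ ℕ => ∏ i ∈ f.support,
        (ENNReal.ofReal ((((i : ℝ) + 1) * m) ^ 2)⁻¹) ^ f i)) ?_
    rw [tsum_finsupp_eq_iSup, eval_iSup m hm]
  -- transfer to ℝ
  have hφ0 : ∀ l : {l : Multiset ℕ+ // ∀ x ∈ l, m ∣ (x : ℕ)},
      0 ≤ ((normP l.1 : ℝ) ^ 2)⁻¹ := fun l => by positivity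
  set φ' : {l : Multiset ℕ+ // ∀ x ∈ l, m ∣ (x : ℕ)} → ℝ≥0 :=
    fun l => ⟨((normP l.1 : ℝ) ^ 2)⁻¹, hφ0 l⟩ with hφ'
  have h1 : HasSum (fun l => (φ' l : ℝ≥0∞)) (ENNReal.ofReal T) := by
    have hsum := ENNReal.summable.hasSum (f := fun l => (φ' l : ℝ≥0∞))
    have heq : ∑' l, (φ' l : ℝ≥0∞) = ENNReal.ofReal T := by
      rw [← key]
      congr 1
      funext l
      exact (ENNReal.ofReal_eq_coe_nnreal (hφ0 l)).symm
    rwa [heq] at hsum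
  have h2 : HasSum φ' T.toNNReal := ENNReal.hasSum_coe.mp h1
  have h3 := NNReal.hasSum_coe.mpr h2
  rw [Real.coe_toNNReal T hT0] at h3
  exact h3
end

section
/- For every integer k ≥ 1, the sum over all partitions λ of length exactly k of n_λ^{−2} equals ((2^{2k−1} − 1)/2^{2k−2}) · ζ(2k): that is, Σ_{ℓ(λ)=k} n_λ^{−2} = ((2^{2k−1} − 1)/2^{2k−2}) · Σ_{n≥1} n^{−2k}, and the series on the left converges. -/
namespace Stmt11
open PowerSeries Finset

noncomputable def Bps : ℚ⟦X⟧ := bernoulliPowerSeries ℚ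
noncomputable def Eh : ℚ⟦X⟧ := rescale (2⁻¹ : ℚ) (exp ℚ)
noncomputable def Gq : ℚ⟦X⟧ := Bps - 2 * rescale (2⁻¹ : ℚ) Bps
noncomputable def Hq : ℚ⟦X⟧ := Bps + C (2⁻¹ : ℚ) * X

lemma bern_mul : Bps * (exp ℚ - 1) = X := bernoulliPowerSeries_mul_exp_sub_one ℚ

lemma Eh_sq : Eh * Eh = exp ℚ := by
  rw [Eh, exp_mul_exp_eq_exp_add]
  norm_num

lemma hq2 : (2 : ℚ⟦X⟧) * C (2⁻¹ : ℚ) = 1 := by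
  have : (2 : ℚ⟦X⟧) = C (2 : ℚ) := by simp [map_ofNat]
  rw [this, ← map_mul]
  norm_num

lemma resc_b : rescale (2⁻¹ : ℚ) Bps * (Eh - 1) = C (2⁻¹ : ℚ) * X := by
  have h := congrArg (rescale (2⁻¹ : ℚ)) (bernoulliPowerSeries_mul_exp_sub_one ℚ)
  rw [map_mul, map_sub, map_one, rescale_X] at h
  exact h

lemma f3 : Gq * (exp ℚ - 1) = -(X * Eh) := by
  have hsub : exp ℚ - 1 = (Eh - 1) * (Eh + 1) := by
    linear_combination -Eh_sq
  calc Gq * (exp ℚ - 1)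
      = Bps * (exp ℚ - 1) - 2 * ((rescale (2⁻¹:ℚ) Bps * (Eh - 1)) * (Eh + 1)) := by
        rw [Gq]; rw [hsub]; ring
    _ = X - 2 * (C (2⁻¹ : ℚ) * X * (Eh + 1)) := by
        rw [bern_mul, resc_b]
    _ = X - (2 * C (2⁻¹ : ℚ)) * (X * (Eh + 1)) := by ring
    _ = -(X * Eh) := by rw [hq2]; ring

lemma d_exp : derivative ℚ (exp ℚ) = exp ℚ := by
  ext n
  rw [coeff_derivative, coeff_exp, coeff_exp]
  simp only [Algebra.algebraMap_self, RingHom.id_apply]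
  rw [Nat.factorial_succ]
  have h1 : ((n:ℚ) + 1) ≠ 0 := by positivity
  have h2 : ((n.factorial : ℚ)) ≠ 0 := by exact_mod_cast Nat.factorial_ne_zero n
  push_cast
  field_simp

lemma d_Eh : derivative ℚ Eh = C (2⁻¹ : ℚ) * Eh := by
  ext n
  rw [coeff_derivative, Eh, coeff_rescale, coeff_exp, coeff_C_mul, coeff_rescale, coeff_exp]
  simp only [Algebra.algebraMap_self, RingHom.id_apply]
  rw [Nat.factorial_succ, pow_succ]
  have h1 : ((n:ℚ) + 1) ≠ 0 := by positivity
  have h2 : ((n.factorial : ℚ)) ≠ 0 := by exact_mod_cast Nat.factorial_ne_zero n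
  push_cast
  field_simp

lemma exp_sub_one_ne : (exp ℚ - 1 : ℚ⟦X⟧) ≠ 0 := by
  intro h
  have := congrArg (coeff 1) h
  rw [map_sub, coeff_exp] at this
  simp at this

lemma key : X * derivative ℚ Gq = Gq * (1 - Hq) := by
  have E1 : derivative ℚ Gq * (exp ℚ - 1) + Gq * exp ℚ
      = -(Eh + X * (C (2⁻¹ : ℚ) * Eh)) := by
    have h5 := congrArg (derivative ℚ) f3
    rw [Derivation.leibniz, map_neg, Derivation.leibniz, derivative_X, d_Eh, map_sub,
      d_exp, Derivation.map_one_eq_zero] at h5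
    simp only [smul_eq_mul, sub_zero, mul_one] at h5
    linear_combination h5
  have hcan : (X * derivative ℚ Gq) * (exp ℚ - 1) = (Gq * (1 - Hq)) * (exp ℚ - 1) := by
    rw [Hq]
    linear_combination (X : ℚ⟦X⟧) * E1 + Gq * bern_mul + (-1 + C (2⁻¹ : ℚ) * X - X) * f3
      + (-(X^2*Eh)) * hq2
  exact mul_right_cancel₀ exp_sub_one_ne hcan

end Stmt11

namespace Stmt11
open PowerSeries Finset

noncomputable def g (n : ℕ) : ℚ := coeff n Gq
noncomputable def Zq (j : ℕ) : ℚ := (-1)^(j+1) * 2^(2*j-1) * bernoulli (2*j) / (2*j).factorial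
noncomputable def tq (m : ℕ) : ℚ := (-1)^(m+1) * 2^(2*m) * g (2*m)

lemma coeff_Gq (n : ℕ) : g n = (1 - 2 * (2⁻¹:ℚ)^n) * (bernoulli n / n.factorial) := by
  have h2 : (2 : ℚ⟦X⟧) = C (2 : ℚ) := by simp [map_ofNat]
  rw [g, Gq, map_sub, h2, coeff_C_mul, coeff_rescale, Bps, bernoulliPowerSeries]
  simp only [coeff_mk, Algebra.algebraMap_self, RingHom.id_apply]
  ring

lemma g_odd (n : ℕ) (h : Odd n) : g n = 0 := by
  rcases Nat.lt_or_ge n 2 with h2 | h2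
  · have : n = 1 := by rcases h with ⟨m, hm⟩; omega
    subst this
    rw [coeff_Gq]
    norm_num
  · rw [coeff_Gq, bernoulli_eq_bernoulli'_of_ne_one (by omega),
      bernoulli'_eq_zero_of_odd h (by omega)]
    ring

lemma coeff_oneSubHq_zero : coeff 0 (1 - Hq) = 0 := by
  rw [map_sub, Hq, map_add, coeff_C_mul, coeff_X, Bps, bernoulliPowerSeries]
  simp

lemma coeff_oneSubHq (j : ℕ) (hj : 2 ≤ j) :
    coeff j (1 - Hq) = -(bernoulli j / j.factorial) := by
  rw [map_sub, Hq, map_add, coeff_C_mul, coeff_X, Bps, bernoulliPowerSeries]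
  simp only [coeff_mk, coeff_one, Algebra.algebraMap_self, RingHom.id_apply]
  rw [if_neg (by omega), if_neg (by omega)]
  ring

lemma sum_range_odd_vanish (ψ : ℕ → ℚ) (h : ∀ j, Odd j → ψ j = 0) (k : ℕ) :
    ∑ j ∈ range (2*k+1), ψ j = ∑ a ∈ range (k+1), ψ (2*a) := by
  induction k with
  | zero => simp
  | succ m ih =>
    have e1 : 2*(m+1)+1 = (2*m+1) + 1 + 1 := by omega
    rw [e1, sum_range_succ, sum_range_succ, ih, h (2*m+1) ⟨m, by omega⟩, add_zero,
      sum_range_succ]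
    conv_rhs => rw [sum_range_succ, sum_range_succ]
    rw [show 2*(m+1) = 2*m+2 from by omega]

lemma C1 (k : ℕ) (hk : 1 ≤ k) :
    (2*k : ℚ) * g (2*k) = ∑ j ∈ range (2*k+1), g j * coeff (2*k - j) (1 - Hq) := by
  obtain ⟨m, rfl⟩ : ∃ m, k = m + 1 := ⟨k-1, by omega⟩
  have h := congrArg (coeff (2*(m+1))) key
  have e1 : 2*(m+1) = (2*m+1) + 1 := by omega
  rw [e1, coeff_succ_X_mul, coeff_derivative, coeff_mul,
    Finset.Nat.sum_antidiagonal_eq_sum_range_succ_mk] at h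
  rw [← e1] at h
  have h' : (coeff (2*(m+1))) Gq * ((2*m+1 : ℕ) + 1 : ℚ)
      = ∑ j ∈ range (2*(m+1)+1), g j * coeff (2*(m+1)-j) (1-Hq) := h
  rw [← h', g]
  push_cast
  ring

lemma C4 (k : ℕ) (hk : 1 ≤ k) :
    (2*k : ℚ) * g (2*k)
      = -∑ i ∈ range k, (bernoulli (2*i+2) / (2*i+2).factorial) * g (2*(k-1-i)) := by
  rw [C1 k hk]
  have hodd : ∀ j, Odd j → g j * coeff (2*k - j) (1 - Hq) = 0 := by
    intro j hj; rw [g_odd j hj, zero_mul]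
  rw [sum_range_odd_vanish _ hodd k, sum_range_succ]
  have h0 : 2*k - 2*k = 0 := by omega
  rw [h0, coeff_oneSubHq_zero, mul_zero, add_zero]
  rw [← sum_range_reflect]
  rw [← Finset.sum_neg_distrib]
  apply sum_congr rfl
  intro i hi
  rw [mem_range] at hi
  have e2 : 2*k - 2*(k-1-i) = 2*i+2 := by omega
  rw [e2, coeff_oneSubHq _ (by omega)]
  ring

lemma qident (k : ℕ) (hk : 1 ≤ k) :
    (k:ℚ) * tq k = ∑ i ∈ range k, Zq (i+1) * tq (k - (i+1)) := by
  have term : ∀ i ∈ range k, Zq (i+1) * tq (k-(i+1))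
      = (-1)^k * 2^(2*k-1) * ((bernoulli (2*i+2) / (2*i+2).factorial) * g (2*(k-1-i))) := by
    intro i hi
    rw [mem_range] at hi
    obtain ⟨a, rfl⟩ : ∃ a, k = i + 1 + a := ⟨k - (i+1), by omega⟩
    simp only [Zq, tq]
    have e1 : i + 1 + a - (i+1) = a := by omega
    have e2 : 2*(i+1) - 1 = 2*i+1 := by omega
    have e3 : 2*(i+1+a) - 1 = 2*i + 2*a + 1 := by omega
    have e4 : i+1+a-1-i = a := by omega
    have e5 : 2*(i+1) = 2*i+2 := by omega
    rw [e1, e2, e3, e4, e5]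
    ring_nf
  have hC : (∑ i ∈ range k, (bernoulli (2*i+2) / ((2*i+2).factorial : ℚ)) * g (2*(k-1-i)))
      = -((2*k:ℚ) * g (2*k)) := by
    linear_combination C4 k hk
  rw [sum_congr rfl term, ← mul_sum, hC, tq]
  obtain ⟨m, rfl⟩ : ∃ m, k = m + 1 := ⟨k-1, by omega⟩
  have e2 : 2*(m+1) - 1 = 2*m+1 := by omega
  rw [e2]
  push_cast
  ring

lemma tq_zero : tq 0 = 1 := by
  rw [tq, coeff_Gq]
  norm_num

lemma tq_eq (m : ℕ) (hm : 1 ≤ m) :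
    tq m = ((2^(2*m-1) - 1)/2^(2*m-2)) * Zq m := by
  obtain ⟨j, rfl⟩ : ∃ j, m = j + 1 := ⟨m-1, by omega⟩
  rw [tq, Zq, coeff_Gq]
  have e1 : 2*(j+1) - 1 = 2*j+1 := by omega
  have e2 : 2*(j+1) - 2 = 2*j := by omega
  have e3 : 2*(j+1) = 2*j+2 := by omega
  rw [e1, e2, e3, inv_pow]
  have h2 : ((2:ℚ))^(2*j) ≠ 0 := by positivity
  have hf : (((2*j+2).factorial : ℚ)) ≠ 0 := by exact_mod_cast Nat.factorial_ne_zero _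
  field_simp
  ring

end Stmt11


namespace Stmt11
open scoped ENNReal
open ENNReal Multiset

lemma normP_zero : normP 0 = 1 := rfl

lemma normP_cons (n : ℕ+) (l : Multiset ℕ+) : normP (n ::ₘ l) = n * normP l := by
  simp [normP]

lemma normP_pos (l : Multiset ℕ+) : 0 < normP l := by
  induction l using Multiset.induction with
  | empty => simp [normP]
  | cons n l ih => rw [normP_cons]; positivity

noncomputable def W (l : Multiset ℕ+) : ℝ≥0∞ := ENNReal.ofReal (((normP l : ℝ)) ^ 2)⁻¹
noncomputable def F (n : ℕ+) : ℝ≥0∞ := ENNReal.ofReal ((((n:ℕ) : ℝ)) ^ 2)⁻¹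
noncomputable def S (m : ℕ) : ℝ≥0∞ := ∑' l : {l : Multiset ℕ+ // Multiset.card l = m}, W l.1
noncomputable def P (j : ℕ) : ℝ≥0∞ := ∑' n : ℕ+, F n ^ j

lemma W_cons (n : ℕ+) (l : Multiset ℕ+) : W (n ::ₘ l) = F n * W l := by
  rw [W, W, F, normP_cons, ← ENNReal.ofReal_mul (by positivity)]
  congr 1
  push_cast
  rw [mul_pow, mul_inv]

lemma W_add_replicate (μ : Multiset ℕ+) (j : ℕ) (n : ℕ+) :
    W (μ + replicate j n) = F n ^ j * W μ := by
  induction j with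
  | zero => simp
  | succ m ih =>
      rw [replicate_succ, add_cons, W_cons, ih, pow_succ]
      ring

lemma W_coe_ofFn {m : ℕ} (v : Fin m → ℕ+) :
    W (↑(List.ofFn v) : Multiset ℕ+) = ∏ i, F (v i) := by
  induction m with
  | zero => simp [W, normP]
  | succ m ih =>
      rw [List.ofFn_succ]
      have : (↑((v 0) :: List.ofFn (fun i : Fin m => v i.succ)) : Multiset ℕ+)
          = (v 0) ::ₘ ↑(List.ofFn (fun i : Fin m => v i.succ)) := rfl
      rw [this, W_cons, ih, Fin.prod_univ_succ]

lemma S_zero : S 0 = 1 := by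
  rw [S, tsum_eq_single (⟨0, rfl⟩ : {l : Multiset ℕ+ // Multiset.card l = 0})]
  · simp [W, normP]
  · intro b hb
    exact absurd (Subtype.ext (Multiset.card_eq_zero.mp b.2)) hb

end Stmt11

namespace Stmt11
open scoped ENNReal
open ENNReal Multiset

noncomputable def Zr (j : ℕ) : ℝ :=
  (-1 : ℝ) ^ (j + 1) * 2 ^ (2 * j - 1) * Real.pi ^ (2 * j) * (bernoulli (2 * j) : ℝ)
    / (2 * j).factorial

lemma hzeta (j : ℕ) (hj : 1 ≤ j) :
    HasSum (fun n : ℕ+ => ((((n:ℕ) : ℝ)) ^ (2 * j))⁻¹) (Zr j) := by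
  have h := hasSum_zeta_nat (k := j) (by omega)
  have hinj : Function.Injective (fun n : ℕ+ => (n : ℕ)) := fun a b hab => by
    exact PNat.coe_injective hab
  rw [← Function.Injective.hasSum_iff hinj ?_] at h
  · convert h using 2 with n
    simp [one_div]
    rfl
  · intro x hx
    have hx0 : x = 0 := by
      by_contra h0
      exact hx ⟨⟨x, Nat.pos_of_ne_zero h0⟩, rfl⟩
    subst hx0
    have h2j : 2 * j ≠ 0 := by omega
    simp [h2j]

lemma Zr_nonneg (j : ℕ) (hj : 1 ≤ j) : 0 ≤ Zr j :=
  (hzeta j hj).nonneg (fun n => by positivity)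

lemma P_eq (j : ℕ) (hj : 1 ≤ j) : P j = ENNReal.ofReal (Zr j) := by
  have hterm : ∀ n : ℕ+, F n ^ j = ENNReal.ofReal (((((n:ℕ)) : ℝ) ^ (2 * j))⁻¹) := by
    intro n
    rw [F, ← ENNReal.ofReal_pow (by positivity)]
    congr 1
    rw [inv_pow, ← pow_mul]
  rw [P]
  simp_rw [hterm]
  rw [← ENNReal.ofReal_tsum_of_nonneg (fun n => by positivity) (hzeta j hj).summable,
    (hzeta j hj).tsum_eq]

lemma P_ne_top (j : ℕ) (hj : 1 ≤ j) : P j ≠ ⊤ := by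
  rw [P_eq j hj]; exact ofReal_ne_top

noncomputable def Q (m : ℕ) : ℝ≥0∞ := ∑' v : Fin m → ℕ+, ∏ i, F (v i)

lemma Q_ne_top (m : ℕ) : Q m ≠ ⊤ := by
  induction m with
  | zero =>
      have : Q 0 = 1 := by
        rw [Q, tsum_eq_single (default : Fin 0 → ℕ+)]
        · simp
        · intro b hb
          exact absurd (Subsingleton.elim b default) hb
      rw [this]; exact one_ne_top
  | succ m ih =>
      have he : Q (m+1) = (∑' n : ℕ+, F n) * Q m := by
        rw [Q, ← Equiv.tsum_eq (Fin.consEquiv (fun _ : Fin (m+1) => ℕ+))]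
        rw [ENNReal.tsum_prod']
        have : ∀ (x : ℕ+) (v : Fin m → ℕ+),
            (∏ i, F ((Fin.consEquiv (fun _ : Fin (m+1) => ℕ+)) (x, v) i)) = F x * ∏ i, F (v i) := by
          intro x v
          simp [Fin.consEquiv, Fin.prod_univ_succ]
        simp_rw [this, ENNReal.tsum_mul_left, ENNReal.tsum_mul_right]
        rfl
      rw [he]
      have h1 : (∑' n : ℕ+, F n) ≠ ⊤ := by
        have : (∑' n : ℕ+, F n) = P 1 := by rw [P]; simp
        rw [this]; exact P_ne_top 1 le_rfl
      exact ENNReal.mul_ne_top h1 ih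

lemma S_ne_top (m : ℕ) : S m ≠ ⊤ := by
  have hsurj : Function.Surjective
      (fun v : Fin m → ℕ+ => (⟨(↑(List.ofFn v) : Multiset ℕ+), by simp⟩
        : {l : Multiset ℕ+ // Multiset.card l = m})) := by
    rintro ⟨l, hl⟩
    have hlen : l.toList.length = m := by rw [Multiset.length_toList, hl]
    subst hlen
    refine ⟨l.toList.get, ?_⟩
    apply Subtype.ext
    simp only []
    rw [List.ofFn_get, Multiset.coe_toList]
  have hle := ENNReal.tsum_le_tsum_comp_of_surjective hsurj
    (fun l : {l : Multiset ℕ+ // Multiset.card l = m} => W l.1)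
  have heq : ∀ v : Fin m → ℕ+, W ((↑(List.ofFn v) : Multiset ℕ+)) = ∏ i, F (v i) :=
    W_coe_ofFn
  refine ne_top_of_le_ne_top (Q_ne_top m) (le_trans hle ?_)
  rw [Q]
  apply le_of_eq
  exact tsum_congr (fun v => heq v)

end Stmt11

namespace Stmt11
open scoped ENNReal
open ENNReal Multiset

abbrev Idx (k : ℕ) : Type :=
  Σ _i : Fin k, ℕ+ × {μ : Multiset ℕ+ // Multiset.card μ = k - ((_i : ℕ) + 1)}

abbrev Part (k : ℕ) : Type := {l : Multiset ℕ+ // Multiset.card l = k}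

def eFun {k : ℕ} : Idx k → Σ l : Part k, l.1.ToType :=
  fun x =>
    ⟨⟨x.2.2.1 + Multiset.replicate ((x.1 : ℕ) + 1) x.2.1, by
        rw [Multiset.card_add, x.2.2.2, Multiset.card_replicate]
        have := x.1.2
        omega⟩,
      ⟨x.2.1, ⟨(x.1 : ℕ), by
        rw [Multiset.count_add, Multiset.count_replicate_self]
        omega⟩⟩⟩

lemma eFun_inj {k : ℕ} : Function.Injective (eFun (k := k)) := by
  rintro ⟨i, n, μ⟩ ⟨i', n', μ'⟩ h
  have hn : n = n' := congrArg (fun x : Σ l : Part k, l.1.ToType => x.2.1) h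
  have hi : (i : ℕ) = (i' : ℕ) := congrArg (fun x : Σ l : Part k, l.1.ToType => (x.2.2 : ℕ)) h
  have hii : i = i' := Fin.ext hi
  subst hii hn
  have hm : μ.1 + Multiset.replicate ((i : ℕ) + 1) n
      = μ'.1 + Multiset.replicate ((i : ℕ) + 1) n := by
    have := congrArg (fun x : Σ l : Part k, l.1.ToType => x.1.1) h
    exact this
  have : μ.1 = μ'.1 := add_right_cancel hm
  have hμ : μ = μ' := Subtype.ext this
  rw [hμ]

lemma sigma_toType_ext {k : ℕ} (a b : Part k) (h : a = b)
    (n : ℕ+) (jv : ℕ) (p1 : jv < Multiset.count n a.1) (p2 : jv < Multiset.count n b.1) :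
    (⟨a, ⟨n, ⟨jv, p1⟩⟩⟩ : Σ l : Part k, l.1.ToType) = ⟨b, ⟨n, ⟨jv, p2⟩⟩⟩ := by
  subst h; rfl

lemma eFun_surj {k : ℕ} : Function.Surjective (eFun (k := k)) := by
  rintro ⟨⟨l, hl⟩, ⟨n, j⟩⟩
  have hcount : (j : ℕ) < Multiset.count n l := j.2
  have hrep : Multiset.replicate ((j : ℕ) + 1) n ≤ l :=
    Multiset.le_count_iff_replicate_le.mp (by omega)
  have hjk : (j : ℕ) < k := by
    have h1 : Multiset.count n l ≤ Multiset.card l := Multiset.count_le_card n l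
    omega
  refine ⟨⟨⟨(j : ℕ), hjk⟩, n, ⟨l - Multiset.replicate ((j : ℕ) + 1) n, ?_⟩⟩, ?_⟩
  · rw [Multiset.card_sub hrep, Multiset.card_replicate, hl]
  · exact sigma_toType_ext _ _ (Subtype.ext (tsub_add_cancel_of_le hrep)) n (j : ℕ) _ j.2

end Stmt11

namespace Stmt11
open scoped ENNReal
open ENNReal Multiset

lemma newton (k : ℕ) :
    (k : ℝ≥0∞) * S k = ∑ i ∈ Finset.range k, P (i+1) * S (k - (i+1)) := by
  have h1 : ∑' a : Idx k, W ((eFun a).1.1) = ∑' b : Σ l : Part k, l.1.ToType, W b.1.1 := by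
    have := (Equiv.ofBijective eFun ⟨eFun_inj, eFun_surj⟩).tsum_eq
      (fun b : Σ l : Part k, l.1.ToType => W b.1.1)
    exact this
  have hR : ∑' b : Σ l : Part k, l.1.ToType, W b.1.1 = (k : ℝ≥0∞) * S k := by
    rw [ENNReal.tsum_sigma' (f := fun b : Σ l : Part k, l.1.ToType => W b.1.1)]
    have hconst : ∀ l : Part k, (∑' _t : l.1.ToType, W l.1) = (k : ℝ≥0∞) * W l.1 := by
      intro l
      rw [tsum_fintype, Finset.sum_const, Finset.card_univ, Multiset.card_coe, l.2,
        nsmul_eq_mul]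
    simp_rw [hconst]
    rw [ENNReal.tsum_mul_left]
    rfl
  have hL : ∑' a : Idx k, W ((eFun a).1.1)
      = ∑ i ∈ Finset.range k, P (i+1) * S (k - (i+1)) := by
    rw [ENNReal.tsum_sigma' (f := fun a : Idx k => W ((eFun a).1.1))]
    have hinner : ∀ i : Fin k,
        (∑' p : ℕ+ × {μ : Multiset ℕ+ // Multiset.card μ = k - ((i:ℕ)+1)},
          W ((eFun ⟨i, p⟩).1.1)) = P ((i:ℕ)+1) * S (k - ((i:ℕ)+1)) := by
      intro i
      have hterm : ∀ p : ℕ+ × {μ : Multiset ℕ+ // Multiset.card μ = k - ((i:ℕ)+1)},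
          W ((eFun ⟨i, p⟩).1.1) = F p.1 ^ ((i:ℕ)+1) * W p.2.1 := by
        intro p
        show W (p.2.1 + Multiset.replicate ((i:ℕ)+1) p.1) = _
        rw [W_add_replicate]
      simp_rw [hterm]
      rw [ENNReal.tsum_prod']
      simp_rw [ENNReal.tsum_mul_left]
      rw [ENNReal.tsum_mul_right]
      rfl
    simp_rw [hinner]
    rw [tsum_fintype]
    exact Fin.sum_univ_eq_sum_range (fun j : ℕ => P (j+1) * S (k - (j+1))) k
  rw [← hR, ← h1, hL]

end Stmt11


namespace Stmt11
open scoped ENNReal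
open ENNReal Multiset Finset

noncomputable def s (m : ℕ) : ℝ := (S m).toReal
noncomputable def treal (m : ℕ) : ℝ := ((tq m : ℝ)) * Real.pi ^ (2*m)

lemma Zr_eq (j : ℕ) : Zr j = ((Zq j : ℝ)) * Real.pi ^ (2*j) := by
  rw [Zr, Zq]
  push_cast
  ring

lemma P_toReal (j : ℕ) (hj : 1 ≤ j) : (P j).toReal = Zr j := by
  rw [P_eq j hj, ENNReal.toReal_ofReal (Zr_nonneg j hj)]

lemma s_newton (k : ℕ) :
    (k:ℝ) * s k = ∑ i ∈ Finset.range k, Zr (i+1) * s (k - (i+1)) := by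
  have h := congrArg ENNReal.toReal (newton k)
  rw [ENNReal.toReal_mul, ENNReal.toReal_natCast,
    ENNReal.toReal_sum (fun i _ => ENNReal.mul_ne_top (P_ne_top (i+1) (by omega))
      (S_ne_top (k - (i+1))))] at h
  rw [s, h]
  apply Finset.sum_congr rfl
  intro i _
  rw [ENNReal.toReal_mul, P_toReal (i+1) (by omega), s]

lemma treal_rec (k : ℕ) (hk : 1 ≤ k) :
    (k:ℝ) * treal k = ∑ i ∈ Finset.range k, Zr (i+1) * treal (k - (i+1)) := by
  have hterm : ∀ i ∈ Finset.range k, Zr (i+1) * treal (k-(i+1))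
      = ((Zq (i+1) * tq (k-(i+1)) : ℚ) : ℝ) * Real.pi ^ (2*k) := by
    intro i hi
    rw [Finset.mem_range] at hi
    rw [Zr_eq, treal]
    have h2 : 2*(i+1) + 2*(k-(i+1)) = 2*k := by omega
    rw [← h2, pow_add]
    push_cast
    ring
  rw [Finset.sum_congr rfl hterm, ← Finset.sum_mul, ← Rat.cast_sum, ← qident k hk, treal]
  push_cast
  ring

lemma s_eq_treal (m : ℕ) : s m = treal m := by
  induction m using Nat.strong_induction_on with
  | _ m ih =>
    match m with
    | 0 =>
        rw [s, S_zero, treal, tq_zero]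
        simp
    | (k+1) =>
        have h1 := s_newton (k+1)
        have h2 := treal_rec (k+1) (by omega)
        have h3 : ∀ i ∈ Finset.range (k+1), Zr (i+1) * s (k+1-(i+1))
            = Zr (i+1) * treal (k+1-(i+1)) := by
          intro i hi
          rw [ih (k+1-(i+1)) (by omega)]
        rw [Finset.sum_congr rfl h3, ← h2] at h1
        have hk0 : ((k:ℝ)+1) ≠ 0 := by positivity
        exact mul_left_cancel₀ (by positivity) h1

end Stmt11

open Stmt11

/-- For every `k ≥ 1`, `Σ_{ℓ(λ)=k} n_λ^{-2} = ((2^{2k-1}-1)/2^{2k-2}) ζ(2k)`, the sum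
running over all partitions with exactly `k` parts, with the series converging. -/
theorem stmt11 (k : ℕ) (hk : 1 ≤ k) :
    HasSum
      (fun l : {l : Multiset ℕ+ // Multiset.card l = k} => ((normP l.1 : ℝ) ^ 2)⁻¹)
      ((((2 : ℝ) ^ (2 * k - 1) - 1) / (2 : ℝ) ^ (2 * k - 2)) *
        ∑' n : ℕ+, (((n : ℕ) : ℝ) ^ (2 * k))⁻¹) := by
  have hsum : (∑' n : ℕ+, (((n:ℕ):ℝ)^(2*k))⁻¹) = Zr k := (hzeta k hk).tsum_eq
  have hk1 : treal k = (((2:ℝ)^(2*k-1) - 1)/2^(2*k-2)) * Zr k := by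
    rw [treal, tq_eq k hk, Zr_eq]
    push_cast
    ring
  rw [hsum, ← hk1, ← s_eq_treal k]
  have hW : ∀ l : Part k, ((normP l.1 : ℝ)^2)⁻¹ = (W l.1).toReal := by
    intro l
    rw [W, ENNReal.toReal_ofReal (by positivity)]
  have hs : Summable (fun l : Part k => ((normP l.1:ℝ)^2)⁻¹) := by
    simp_rw [hW]
    exact ENNReal.summable_toReal (S_ne_top k)
  have htsum : ∑' l : Part k, ((normP l.1:ℝ)^2)⁻¹ = s k := by
    simp_rw [hW]
    rw [s, S]
    exact (ENNReal.tsum_toReal_eq (fun a => by rw [W]; exact ENNReal.ofReal_ne_top)).symm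
  have := hs.hasSum
  rw [htsum] at this
  exact this
end

section
/- Summing over all partitions into distinct parts (including the empty partition), Σ_{λ ∈ P*} n_λ^{−2} = sinh(π)/π, and the series converges. Equivalently, summing over all finite sets S of positive integers, Σ_S ( Π_{i∈S} i )^{−2} = sinh(π)/π. -/
open Filter Topology Finset

private lemma prod_tendsto13 :
    Tendsto (fun n : ℕ => ∏ j ∈ Finset.range n, ((1 : ℝ) + (((j : ℝ) + 1) ^ 2)⁻¹))
      atTop (𝓝 (Real.sinh Real.pi / Real.pi)) := by
  have h := Complex.tendsto_euler_sin_prod Complex.I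
  have hne : (Real.pi : ℂ) * Complex.I ≠ 0 := by
    simp [Real.pi_ne_zero, Complex.I_ne_zero]
  have h2 : Tendsto (fun n : ℕ =>
      ∏ j ∈ Finset.range n, ((1 : ℂ) - Complex.I ^ 2 / ((j : ℂ) + 1) ^ 2))
      atTop (𝓝 (Complex.sin (Real.pi * Complex.I) / (Real.pi * Complex.I))) := by
    have := h.div_const ((Real.pi : ℂ) * Complex.I)
    simpa [mul_div_assoc, mul_div_cancel_left₀ _ hne] using this
  have hsin : Complex.sin (Real.pi * Complex.I) / ((Real.pi : ℂ) * Complex.I)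
      = ((Real.sinh Real.pi / Real.pi : ℝ) : ℂ) := by
    rw [Complex.sin_mul_I, mul_div_mul_right _ _ Complex.I_ne_zero]
    push_cast [← Complex.ofReal_sinh]
    rfl
  rw [hsin] at h2
  have h3 := (Complex.continuous_re.tendsto _).comp h2
  simp only [Complex.ofReal_re] at h3
  convert h3 using 2 with n
  rw [Function.comp_apply]
  have : ∀ j ∈ Finset.range n, ((1 : ℂ) - Complex.I ^ 2 / ((j : ℂ) + 1) ^ 2)
      = (((1 : ℝ) + (((j : ℝ) + 1) ^ 2)⁻¹ : ℝ) : ℂ) := by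
    intro j _
    rw [Complex.I_sq]
    push_cast
    ring
  rw [Finset.prod_congr rfl this, ← Complex.ofReal_prod, Complex.ofReal_re]

/-- Summing over all partitions into distinct parts — equivalently, over all finite sets
`S` of positive integers — we have `Σ_S (Π_{i∈S} i)^{-2} = sinh(π)/π`, with the series
converging. -/
theorem stmt13 :
    HasSum (fun S : Finset ℕ+ => ((∏ i ∈ S, ((i : ℕ) : ℝ)) ^ 2)⁻¹)
      (Real.sinh Real.pi / Real.pi) := by
  set g : ℕ+ → ℝ := fun i => ((((i : ℕ) : ℝ)) ^ 2)⁻¹ with hgdef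
  have hfun : (fun S : Finset ℕ+ => ((∏ i ∈ S, ((i : ℕ) : ℝ)) ^ 2)⁻¹)
      = fun S : Finset ℕ+ => ∏ i ∈ S, g i := by
    funext S
    rw [← Finset.prod_pow, ← Finset.prod_inv_distrib]
  rw [hfun]
  set L : ℝ := Real.sinh Real.pi / Real.pi with hL
  have hg0 : ∀ i, 0 ≤ g i := fun i => by positivity
  have hg1 : ∀ i : ℕ+, (1 : ℝ) ≤ 1 + g i := fun i => le_add_of_nonneg_right (hg0 i)
  -- the powerset sum equals the product
  have hpow : ∀ T : Finset ℕ+, ∑ S ∈ T.powerset, ∏ i ∈ S, g i = ∏ i ∈ T, (1 + g i) := by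
    intro T
    have := Finset.prod_add g (fun _ => (1 : ℝ)) T
    simp only [Finset.prod_const_one, mul_one] at this
    rw [← this]
    exact Finset.prod_congr rfl fun i _ => (add_comm _ _)
  -- embedding of range n into ℕ+
  let e : ℕ ↪ ℕ+ := ⟨Nat.succPNat, Nat.succPNat_injective⟩
  have hTn : ∀ n : ℕ, ∏ i ∈ (Finset.range n).map e, (1 + g i)
      = ∏ j ∈ Finset.range n, ((1 : ℝ) + (((j : ℝ) + 1) ^ 2)⁻¹) := by
    intro n
    rw [Finset.prod_map]
    refine Finset.prod_congr rfl fun j _ => ?_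
    have he : ((e j : ℕ) : ℝ) = (j : ℝ) + 1 := by
      simp only [Function.Embedding.coeFn_mk, e, Nat.succPNat_coe]
      push_cast
      ring
    rw [hgdef]
    dsimp only
    rw [he]
  have hmono : Monotone (fun n : ℕ =>
      ∏ j ∈ Finset.range n, ((1 : ℝ) + (((j : ℝ) + 1) ^ 2)⁻¹)) := by
    apply monotone_nat_of_le_succ
    intro n
    rw [Finset.prod_range_succ]
    have h1 : (0 : ℝ) ≤ ∏ j ∈ Finset.range n, ((1 : ℝ) + (((j : ℝ) + 1) ^ 2)⁻¹) :=
      Finset.prod_nonneg fun j _ => by positivity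
    nlinarith [sq_nonneg ((n : ℝ) + 1), inv_nonneg.mpr (sq_nonneg ((n : ℝ) + 1))]
  have hle : ∀ n : ℕ, ∏ j ∈ Finset.range n, ((1 : ℝ) + (((j : ℝ) + 1) ^ 2)⁻¹) ≤ L :=
    fun n => hmono.ge_of_tendsto prod_tendsto13 n
  -- any finite product is ≤ L
  have hprodle : ∀ T : Finset ℕ+, ∏ i ∈ T, (1 + g i) ≤ L := by
    intro T
    set n : ℕ := T.sup fun i => (i : ℕ) with hn
    have hsub : T ⊆ (Finset.range n).map e := by
      intro i hi
      rw [Finset.mem_map]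
      refine ⟨(i : ℕ) - 1, Finset.mem_range.mpr ?_, ?_⟩
      · have h1 : (i : ℕ) ≤ n := Finset.le_sup (f := fun i : ℕ+ => (i : ℕ)) hi
        have h2 : 1 ≤ (i : ℕ) := i.one_le
        omega
      · have h2 : 1 ≤ (i : ℕ) := i.one_le
        apply PNat.coe_injective
        simp only [Function.Embedding.coeFn_mk, e, Nat.succPNat_coe]
        omega
    have h1 : ∏ i ∈ T, (1 + g i) ≤ ∏ i ∈ (Finset.range n).map e, (1 + g i) := by
      rw [← Finset.prod_sdiff hsub]
      have hone : (1 : ℝ) ≤ ∏ i ∈ ((Finset.range n).map e) \ T, (1 + g i) :=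
        calc (1 : ℝ) = ∏ _i ∈ ((Finset.range n).map e) \ T, (1 : ℝ) :=
              (Finset.prod_const_one).symm
          _ ≤ _ := Finset.prod_le_prod (fun i _ => zero_le_one) (fun i _ => hg1 i)
      exact le_mul_of_one_le_left
        (Finset.prod_nonneg fun i _ => le_trans zero_le_one (hg1 i)) hone
    calc ∏ i ∈ T, (1 + g i) ≤ ∏ i ∈ (Finset.range n).map e, (1 + g i) := h1
      _ = _ := hTn n
      _ ≤ L := hle n
  apply hasSum_of_isLUB_of_nonneg _ (fun S => Finset.prod_nonneg fun i _ => hg0 i)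
  constructor
  · rintro x ⟨𝒮, rfl⟩
    calc ∑ S ∈ 𝒮, ∏ i ∈ S, g i
        ≤ ∑ S ∈ (𝒮.sup id).powerset, ∏ i ∈ S, g i := by
          apply Finset.sum_le_sum_of_subset_of_nonneg
          · intro S hS
            exact Finset.mem_powerset.mpr (Finset.le_sup (f := id) hS)
          · intro S _ _
            exact Finset.prod_nonneg fun i _ => hg0 i
      _ = ∏ i ∈ 𝒮.sup id, (1 + g i) := hpow _
      _ ≤ L := hprodle _
  · intro b hb
    refine le_of_tendsto prod_tendsto13 (Eventually.of_forall fun n => ?_)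
    have : ∏ j ∈ Finset.range n, ((1 : ℝ) + (((j : ℝ) + 1) ^ 2)⁻¹)
        = ∑ S ∈ ((Finset.range n).map e).powerset, ∏ i ∈ S, g i := by
      rw [hpow, hTn]
    rw [this]
    exact hb ⟨((Finset.range n).map e).powerset, rfl⟩
end

section
/- For every integer k ≥ 1, the multiple zeta value ζ({2}^k) satisfies Σ_{n₁ > n₂ > ⋯ > n_k ≥ 1} ( n₁ n₂ ⋯ n_k )^{−2} = π^{2k} / (2k+1)!, where the sum runs over all strictly decreasing k-tuples of positive integers (equivalently, over all finite sets of positive integers of cardinality k), and the series converges. -/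
open Finset Filter Topology

namespace Stmt14

/-! ### Elementary symmetric partial sums of `1/(j+1)^2` -/

noncomputable def E (k N : ℕ) : ℝ :=
  ∑ S ∈ powersetCard k (range N), ∏ j ∈ S, (((j : ℝ) + 1) ^ 2)⁻¹

lemma term_nonneg (S : Finset ℕ) : 0 ≤ ∏ j ∈ S, (((j : ℝ) + 1) ^ 2)⁻¹ :=
  prod_nonneg fun j _ => by positivity

lemma E_nonneg (k N : ℕ) : 0 ≤ E k N := sum_nonneg fun S _ => term_nonneg S

lemma E_mono (k : ℕ) : Monotone (E k) := fun _ _ h =>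
  sum_le_sum_of_subset_of_nonneg (powersetCard_mono (range_subset_range.2 h))
    fun S _ _ => term_nonneg S

lemma E_eq_zero {k N : ℕ} (h : N < k) : E k N = 0 := by
  rw [E, powersetCard_eq_empty.2 (by simpa using h), sum_empty]

lemma prod_eq_sum (y : ℝ) (N : ℕ) :
    ∏ j ∈ range N, (1 + y ^ 2 / ((j : ℝ) + 1) ^ 2)
      = ∑ k ∈ range (N + 1), E k N * y ^ (2 * k) := by
  have h1 : ∀ j ∈ range N, (1 : ℝ) + y ^ 2 / ((j : ℝ) + 1) ^ 2
      = y ^ 2 * (((j : ℝ) + 1) ^ 2)⁻¹ + 1 := fun j _ => by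
    rw [div_eq_mul_inv]; ring
  rw [prod_congr rfl h1, prod_add]
  simp only [prod_const_one, mul_one]
  rw [sum_powerset (range N) fun t => ∏ j ∈ t, y ^ 2 * (((j : ℝ) + 1) ^ 2)⁻¹, card_range]
  refine sum_congr rfl fun k _ => ?_
  rw [E, sum_mul]
  refine sum_congr rfl fun S hS => ?_
  have hk : S.card = k := (mem_powersetCard.mp hS).2
  rw [prod_mul_distrib, prod_const, hk, pow_mul]
  ring

/-! ### The Euler product limit -/

lemma tendsto_prod (y : ℝ) :
    Tendsto (fun N => Real.pi * y * ∏ j ∈ range N, (1 + y ^ 2 / ((j : ℝ) + 1) ^ 2))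
      atTop (𝓝 (Real.sinh (Real.pi * y))) := by
  have h := Complex.tendsto_euler_sin_prod ((y : ℂ) * Complex.I)
  have h2 := (Complex.continuous_im.tendsto _).comp h
  have hval : ∀ N : ℕ,
      ((Real.pi : ℂ) * ((y : ℂ) * Complex.I) *
          ∏ j ∈ range N, (1 - ((y : ℂ) * Complex.I) ^ 2 / ((j : ℂ) + 1) ^ 2))
        = ((Real.pi * y * ∏ j ∈ range N, (1 + y ^ 2 / ((j : ℝ) + 1) ^ 2) : ℝ) : ℂ)
            * Complex.I := by
    intro N
    have hf : ∀ j ∈ range N, (1 : ℂ) - ((y : ℂ) * Complex.I) ^ 2 / ((j : ℂ) + 1) ^ 2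
        = ((1 + y ^ 2 / ((j : ℝ) + 1) ^ 2 : ℝ) : ℂ) := fun j _ => by
      rw [mul_pow, Complex.I_sq]
      push_cast
      ring
    rw [prod_congr rfl hf, ← Complex.ofReal_prod]
    push_cast
    ring
  have hsin : Complex.sin ((Real.pi : ℂ) * ((y : ℂ) * Complex.I))
      = ((Real.sinh (Real.pi * y) : ℝ) : ℂ) * Complex.I := by
    rw [show ((Real.pi : ℂ) * ((y : ℂ) * Complex.I))
        = ((Real.pi * y : ℝ) : ℂ) * Complex.I by push_cast; ring,
      Complex.sin_mul_I, Complex.ofReal_sinh]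
  have h3 : Tendsto (fun N => Real.pi * y * ∏ j ∈ range N, (1 + y ^ 2 / ((j : ℝ) + 1) ^ 2))
      atTop (𝓝 ((Complex.sin ((Real.pi : ℂ) * ((y : ℂ) * Complex.I))).im)) := by
    refine h2.congr fun N => ?_
    rw [Function.comp_apply, hval, Complex.mul_I_im, Complex.ofReal_re]
  rwa [hsin, Complex.mul_I_im, Complex.ofReal_re] at h3

lemma prod_mono (y : ℝ) :
    Monotone fun N => ∏ j ∈ range N, (1 + y ^ 2 / ((j : ℝ) + 1) ^ 2) := by
  intro M N h
  dsimp only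
  have hone : (1 : ℝ) ≤ ∏ j ∈ Finset.Ico M N, (1 + y ^ 2 / ((j : ℝ) + 1) ^ 2) := by
    have hpp := Finset.prod_le_prod (s := Finset.Ico M N) (f := fun _ : ℕ => (1 : ℝ))
      (g := fun j : ℕ => 1 + y ^ 2 / ((j : ℝ) + 1) ^ 2) (fun j _ => by positivity)
      (fun j _ => by
        have : 0 ≤ y ^ 2 / ((j : ℝ) + 1) ^ 2 := by positivity
        linarith)
    simpa using hpp
  have hPM : 0 ≤ ∏ j ∈ range M, (1 + y ^ 2 / ((j : ℝ) + 1) ^ 2) :=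
    prod_nonneg fun j _ => by positivity
  calc ∏ j ∈ range M, (1 + y ^ 2 / ((j : ℝ) + 1) ^ 2)
      = (∏ j ∈ range M, (1 + y ^ 2 / ((j : ℝ) + 1) ^ 2)) * 1 := (mul_one _).symm
    _ ≤ (∏ j ∈ range M, (1 + y ^ 2 / ((j : ℝ) + 1) ^ 2))
          * ∏ j ∈ Finset.Ico M N, (1 + y ^ 2 / ((j : ℝ) + 1) ^ 2) :=
        mul_le_mul_of_nonneg_left hone hPM
    _ = ∏ j ∈ range N, (1 + y ^ 2 / ((j : ℝ) + 1) ^ 2) := prod_range_mul_prod_Ico _ h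

lemma tendsto_P {y : ℝ} (hy : 0 < y) :
    Tendsto (fun N => ∏ j ∈ range N, (1 + y ^ 2 / ((j : ℝ) + 1) ^ 2)) atTop
      (𝓝 (Real.sinh (Real.pi * y) / (Real.pi * y))) := by
  have hπy : Real.pi * y ≠ 0 := by positivity
  have h := (tendsto_prod y).div_const (Real.pi * y)
  have heq : (fun N => ∏ j ∈ range N, (1 + y ^ 2 / ((j : ℝ) + 1) ^ 2))
      = fun N => (Real.pi * y * ∏ j ∈ range N, (1 + y ^ 2 / ((j : ℝ) + 1) ^ 2))
          / (Real.pi * y) := by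
    funext N
    rw [mul_comm (Real.pi * y), mul_div_assoc, div_self hπy, mul_one]
  rw [heq]
  exact h

lemma tendsto_S {y : ℝ} (hy : 0 < y) :
    Tendsto (fun N => ∑ k ∈ range (N + 1), E k N * y ^ (2 * k)) atTop
      (𝓝 (Real.sinh (Real.pi * y) / (Real.pi * y))) := by
  simpa only [prod_eq_sum] using tendsto_P hy

/-! ### Monotone convergence in `ℝ≥0∞` -/

lemma tsum_iSup_swap (a : ℕ → ℕ → ENNReal) (ha : ∀ k, Monotone fun N => a N k) :
    ∑' k, ⨆ N, a N k = ⨆ N, ∑' k, a N k := by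
  refine le_antisymm ?_
    (iSup_le fun N => ENNReal.tsum_le_tsum fun k => le_iSup (fun N => a N k) N)
  rw [ENNReal.tsum_eq_iSup_sum]
  refine iSup_le fun s => ?_
  rw [ENNReal.finsetSum_iSup_of_monotone ha]
  exact iSup_le fun N => le_iSup_of_le N (ENNReal.sum_le_tsum s)

noncomputable def L (k : ℕ) : ENNReal := ⨆ N, ENNReal.ofReal (E k N)

lemma tsum_L {y : ℝ} (hy : 0 < y) :
    ∑' k, L k * ENNReal.ofReal (y ^ (2 * k))
      = ENNReal.ofReal (Real.sinh (Real.pi * y) / (Real.pi * y)) := by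
  have hmono : ∀ k, Monotone fun N => ENNReal.ofReal (E k N * y ^ (2 * k)) :=
    fun k M N h => ENNReal.ofReal_le_ofReal
      (mul_le_mul_of_nonneg_right (E_mono k h) (by positivity))
  have h1 : ∀ k, L k * ENNReal.ofReal (y ^ (2 * k))
      = ⨆ N, ENNReal.ofReal (E k N * y ^ (2 * k)) := by
    intro k
    rw [L, ENNReal.iSup_mul]
    exact iSup_congr fun N => (ENNReal.ofReal_mul (E_nonneg k N)).symm
  have h2 : ∀ N, ∑' k, ENNReal.ofReal (E k N * y ^ (2 * k))
      = ENNReal.ofReal (∑ k ∈ range (N + 1), E k N * y ^ (2 * k)) := by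
    intro N
    rw [ENNReal.ofReal_sum_of_nonneg fun k _ => mul_nonneg (E_nonneg k N) (by positivity)]
    refine tsum_eq_sum fun k hk => ?_
    simp only [mem_range, not_lt] at hk
    rw [E_eq_zero (by omega), zero_mul, ENNReal.ofReal_zero]
  calc ∑' k, L k * ENNReal.ofReal (y ^ (2 * k))
      = ∑' k, ⨆ N, ENNReal.ofReal (E k N * y ^ (2 * k)) := by simp_rw [h1]
    _ = ⨆ N, ∑' k, ENNReal.ofReal (E k N * y ^ (2 * k)) := tsum_iSup_swap _ hmono
    _ = ⨆ N, ENNReal.ofReal (∑ k ∈ range (N + 1), E k N * y ^ (2 * k)) := by simp_rw [h2]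
    _ = ENNReal.ofReal (Real.sinh (Real.pi * y) / (Real.pi * y)) := by
        refine iSup_eq_of_tendsto ?_
          ((ENNReal.continuous_ofReal.tendsto _).comp (tendsto_S hy))
        intro M N h
        refine ENNReal.ofReal_le_ofReal ?_
        rw [← prod_eq_sum, ← prod_eq_sum]
        exact prod_mono y h

lemma L_ne_top (k : ℕ) : L k ≠ ⊤ := by
  have h2 : L k * ENNReal.ofReal ((1 : ℝ) ^ (2 * k))
      ≤ ∑' k, L k * ENNReal.ofReal ((1 : ℝ) ^ (2 * k)) := ENNReal.le_tsum k
  rw [tsum_L one_pos] at h2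
  simp only [one_pow, ENNReal.ofReal_one, mul_one] at h2
  exact ne_top_of_le_ne_top ENNReal.ofReal_ne_top h2

noncomputable def ell (k : ℕ) : ℝ := (L k).toReal

lemma ell_nonneg (k : ℕ) : 0 ≤ ell k := ENNReal.toReal_nonneg

lemma ofReal_ell (k : ℕ) : ENNReal.ofReal (ell k) = L k :=
  ENNReal.ofReal_toReal (L_ne_top k)

lemma hasSum_ell {y : ℝ} (hy : 0 < y) :
    HasSum (fun k => ell k * y ^ (2 * k)) (Real.sinh (Real.pi * y) / (Real.pi * y)) := by
  have key : ∑' k, ENNReal.ofReal (ell k * y ^ (2 * k))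
      = ENNReal.ofReal (Real.sinh (Real.pi * y) / (Real.pi * y)) := by
    rw [← tsum_L hy]
    exact tsum_congr fun k => by rw [ENNReal.ofReal_mul (ell_nonneg k), ofReal_ell]
  have hne : ∑' k, ENNReal.ofReal (ell k * y ^ (2 * k)) ≠ ⊤ := by
    rw [key]; exact ENNReal.ofReal_ne_top
  have hterm : ∀ k : ℕ, 0 ≤ ell k * y ^ (2 * k) :=
    fun k => mul_nonneg (ell_nonneg k) (pow_nonneg hy.le _)
  have hsumm : Summable fun k => ell k * y ^ (2 * k) := by
    have h := ENNReal.summable_toReal hne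
    exact h.congr fun k => ENNReal.toReal_ofReal (hterm k)
  have htsum : ∑' k, ell k * y ^ (2 * k) = Real.sinh (Real.pi * y) / (Real.pi * y) := by
    calc ∑' k, ell k * y ^ (2 * k)
        = ∑' k, (ENNReal.ofReal (ell k * y ^ (2 * k))).toReal :=
          tsum_congr fun k => (ENNReal.toReal_ofReal (hterm k)).symm
      _ = (∑' k, ENNReal.ofReal (ell k * y ^ (2 * k))).toReal :=
          (ENNReal.tsum_toReal_eq fun k => ENNReal.ofReal_ne_top).symm
      _ = Real.sinh (Real.pi * y) / (Real.pi * y) := by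
          rw [key, ENNReal.toReal_ofReal
            (div_nonneg (Real.sinh_nonneg_iff.mpr (by positivity)) (by positivity))]
  exact htsum ▸ hsumm.hasSum

lemma hasSum_c {y : ℝ} (hy : 0 < y) :
    HasSum (fun k => Real.pi ^ (2 * k) / (Nat.factorial (2 * k + 1) : ℝ) * y ^ (2 * k))
      (Real.sinh (Real.pi * y) / (Real.pi * y)) := by
  have h := (Real.hasSum_sinh (Real.pi * y)).div_const (Real.pi * y)
  have hπy : Real.pi * y ≠ 0 := by positivity
  have hfun : (fun k => Real.pi ^ (2 * k) / (Nat.factorial (2 * k + 1) : ℝ) * y ^ (2 * k))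
      = fun k => (Real.pi * y) ^ (2 * k + 1) / (Nat.factorial (2 * k + 1) : ℝ)
          / (Real.pi * y) := by
    funext k
    have hfac : ((Nat.factorial (2 * k + 1)) : ℝ) ≠ 0 :=
      Nat.cast_ne_zero.mpr (Nat.factorial_ne_zero _)
    rw [pow_succ, mul_pow]
    field_simp
  rw [hfun]
  exact h

/-! ### Uniqueness of coefficients -/

lemma le_coeff {a b : ℕ → ℝ} (k : ℕ) (ha : ∀ j, 0 ≤ a j) (hb : ∀ j, 0 ≤ b j)
    (hsa : Summable fun j => a (j + k)) (hsb : Summable fun j => b (j + k))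
    (hab : ∀ y : ℝ, 0 < y → y ≤ 1 →
      ∑' j, a (j + k) * y ^ (2 * (j + k)) = ∑' j, b (j + k) * y ^ (2 * (j + k))) :
    a k ≤ b k := by
  have hsb1 : Summable fun j => b (j + 1 + k) := (summable_nat_add_iff 1).2 hsb
  set C : ℝ := ∑' j, b (j + 1 + k) with hC
  have hC0 : 0 ≤ C := tsum_nonneg fun j => hb _
  have claim : ∀ y : ℝ, 0 < y → y ≤ 1 → a k ≤ b k + C * y ^ 2 := by
    intro y hy hy1
    have hyk : (0 : ℝ) < y ^ (2 * k) := by positivity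
    have hsay : Summable fun j => a (j + k) * y ^ (2 * (j + k)) := by
      refine Summable.of_nonneg_of_le
        (fun j => mul_nonneg (ha _) (pow_nonneg hy.le _))
        (fun j => mul_le_of_le_one_right (ha _) (pow_le_one₀ hy.le hy1)) hsa
    have hsby : Summable fun j => b (j + k) * y ^ (2 * (j + k)) := by
      refine Summable.of_nonneg_of_le
        (fun j => mul_nonneg (hb _) (pow_nonneg hy.le _))
        (fun j => mul_le_of_le_one_right (hb _) (pow_le_one₀ hy.le hy1)) hsb
    have h1 : a k * y ^ (2 * k) ≤ ∑' j, a (j + k) * y ^ (2 * (j + k)) := by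
      have := Summable.le_tsum hsay 0 fun j _ =>
        mul_nonneg (ha _) (pow_nonneg hy.le _)
      simpa using this
    have h2 : ∑' j, b (j + k) * y ^ (2 * (j + k))
        ≤ b k * y ^ (2 * k) + C * (y ^ (2 * k) * y ^ 2) := by
      have hsplit := Summable.sum_add_tsum_nat_add (f := fun j => b (j + k) * y ^ (2 * (j + k))) 1 hsby
      rw [← hsplit]
      simp only [range_one, sum_singleton, zero_add]
      have htail : ∑' j, b (j + 1 + k) * y ^ (2 * (j + 1 + k))
          ≤ C * (y ^ (2 * k) * y ^ 2) := by
        have hle : ∀ j : ℕ, b (j + 1 + k) * y ^ (2 * (j + 1 + k))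
            ≤ b (j + 1 + k) * (y ^ (2 * k) * y ^ 2) := by
          intro j
          refine mul_le_mul_of_nonneg_left ?_ (hb _)
          rw [← pow_add]
          exact pow_le_pow_of_le_one hy.le hy1 (by omega)
        calc ∑' j, b (j + 1 + k) * y ^ (2 * (j + 1 + k))
            ≤ ∑' j, b (j + 1 + k) * (y ^ (2 * k) * y ^ 2) := by
              refine Summable.tsum_le_tsum hle ?_ (hsb1.mul_right _)
              refine Summable.of_nonneg_of_le
                (fun j => mul_nonneg (hb _) (pow_nonneg hy.le _)) hle (hsb1.mul_right _)
          _ = C * (y ^ (2 * k) * y ^ 2) := by rw [tsum_mul_right]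
      gcongr
    have h3 : a k * y ^ (2 * k) ≤ (b k + C * y ^ 2) * y ^ (2 * k) := by
      have := (h1.trans ((hab y hy hy1).le)).trans h2
      nlinarith [this]
    exact le_of_mul_le_mul_right (by simpa [mul_comm] using h3) hyk
  have hTend : Tendsto (fun n : ℕ => b k + C * (1 / ((n : ℝ) + 1)) ^ 2) atTop (𝓝 (b k)) := by
    have h0 : Tendsto (fun n : ℕ => 1 / ((n : ℝ) + 1)) atTop (𝓝 0) :=
      tendsto_one_div_add_atTop_nhds_zero_nat
    have := ((h0.pow 2).const_mul C).const_add (b k)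
    simpa using this
  refine ge_of_tendsto hTend (Eventually.of_forall fun n => ?_)
  refine claim (1 / ((n : ℝ) + 1)) (by positivity) ?_
  rw [div_le_one (by positivity)]
  have : (0 : ℝ) ≤ (n : ℝ) := Nat.cast_nonneg n
  linarith

lemma coeff_eq {a b : ℕ → ℝ} (ha : ∀ j, 0 ≤ a j) (hb : ∀ j, 0 ≤ b j)
    (h : ∀ y : ℝ, 0 < y → y ≤ 1 →
      ∃ s, HasSum (fun k => a k * y ^ (2 * k)) s ∧ HasSum (fun k => b k * y ^ (2 * k)) s) :
    ∀ k, a k = b k := by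
  have hA : Summable a := by
    obtain ⟨s, hs1, _⟩ := h 1 one_pos le_rfl
    simpa using hs1.summable
  have hB : Summable b := by
    obtain ⟨s, _, hs2⟩ := h 1 one_pos le_rfl
    simpa using hs2.summable
  intro k
  induction k using Nat.strong_induction_on with
  | _ k ih =>
    have hshift : ∀ y : ℝ, 0 < y → y ≤ 1 →
        ∑' j, a (j + k) * y ^ (2 * (j + k)) = ∑' j, b (j + k) * y ^ (2 * (j + k)) := by
      intro y hy hy1
      obtain ⟨s, hsa, hsb⟩ := h y hy hy1
      have e1 := Summable.sum_add_tsum_nat_add (f := fun k => a k * y ^ (2 * k)) k hsa.summable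
      have e2 := Summable.sum_add_tsum_nat_add (f := fun k => b k * y ^ (2 * k)) k hsb.summable
      rw [hsa.tsum_eq] at e1
      rw [hsb.tsum_eq] at e2
      have hhead : ∑ i ∈ range k, a i * y ^ (2 * i) = ∑ i ∈ range k, b i * y ^ (2 * i) :=
        sum_congr rfl fun i hi => by rw [ih i (mem_range.mp hi)]
      linarith
    have hsa' : Summable fun j => a (j + k) := (summable_nat_add_iff k).2 hA
    have hsb' : Summable fun j => b (j + k) := (summable_nat_add_iff k).2 hB
    exact le_antisymm (le_coeff k ha hb hsa' hsb' hshift)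
      (le_coeff k hb ha hsb' hsa' fun y hy hy1 => (hshift y hy hy1).symm)

lemma ell_eq (k : ℕ) : ell k = Real.pi ^ (2 * k) / (Nat.factorial (2 * k + 1) : ℝ) :=
  coeff_eq ell_nonneg (fun j => by positivity)
    (fun y hy _ => ⟨_, hasSum_ell hy, hasSum_c hy⟩) k

/-! ### From finsets of `ℕ` to finsets of `ℕ+` -/

lemma f_eq (S : Finset ℕ) :
    ((∏ i ∈ S.image Nat.succPNat, ((i : ℕ) : ℝ)) ^ 2)⁻¹
      = ∏ j ∈ S, (((j : ℝ) + 1) ^ 2)⁻¹ := by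
  rw [prod_image fun x _ y _ h => Nat.succPNat_injective h, ← prod_pow, prod_inv_distrib]
  refine congrArg Inv.inv (Finset.prod_congr rfl fun j _ => ?_)
  rw [Nat.succPNat_coe]
  push_cast
  ring

lemma hud (A : Finset ℕ+) :
    (A.image fun i : ℕ+ => (i : ℕ) - 1).image Nat.succPNat = A := by
  rw [Finset.image_image]
  have hcomp : (Nat.succPNat ∘ fun i : ℕ+ => (i : ℕ) - 1) = id := by
    funext i
    simp only [Function.comp_apply, id_eq]
    apply PNat.coe_injective
    rw [Nat.succPNat_coe]
    have := i.pos
    omega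
  rw [hcomp, Finset.image_id]

lemma E_mem_range (k N : ℕ) :
    ∃ W : Finset {S : Finset ℕ+ // S.card = k},
      ∑ S ∈ W, ((∏ i ∈ S.1, ((i : ℕ) : ℝ)) ^ 2)⁻¹ = E k N := by
  classical
  refine ⟨(powersetCard k (range N)).attach.image
    (fun S => ⟨S.1.image Nat.succPNat, by
      rw [card_image_of_injective _ Nat.succPNat_injective,
        (mem_powersetCard.mp S.2).2]⟩), ?_⟩
  rw [sum_image (by
    intro x _ y _ hxy
    exact Subtype.ext (Finset.image_injective Nat.succPNat_injective
      (congrArg Subtype.val hxy)))]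
  calc ∑ x ∈ (powersetCard k (range N)).attach,
        ((∏ i ∈ x.1.image Nat.succPNat, ((i : ℕ) : ℝ)) ^ 2)⁻¹
      = ∑ x ∈ (powersetCard k (range N)).attach, ∏ j ∈ x.1, (((j : ℝ) + 1) ^ 2)⁻¹ :=
        sum_congr rfl fun x _ => f_eq x.1
    _ = E k N := by
        rw [E]
        exact sum_attach (powersetCard k (range N))
          (fun S => ∏ j ∈ S, (((j : ℝ) + 1) ^ 2)⁻¹)

lemma sum_le_E {k : ℕ} (W : Finset {S : Finset ℕ+ // S.card = k}) :
    ∃ N, ∑ S ∈ W, ((∏ i ∈ S.1, ((i : ℕ) : ℝ)) ^ 2)⁻¹ ≤ E k N := by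
  classical
  have hinj : Function.Injective (fun i : ℕ+ => (i : ℕ) - 1) := by
    intro i j h
    simp only at h
    have hi := i.pos
    have hj := j.pos
    exact PNat.coe_injective (by omega)
  set N := W.sup (fun S => S.1.sup fun i => (i : ℕ)) with hN
  refine ⟨N, ?_⟩
  have hdown : ∀ S ∈ W,
      (S : {S : Finset ℕ+ // S.card = k}).1.image (fun i : ℕ+ => (i : ℕ) - 1)
        ∈ powersetCard k (range N) := by
    intro S hS
    rw [mem_powersetCard]
    constructor
    · intro j hj
      simp only [mem_image] at hj
      obtain ⟨i, hi, rfl⟩ := hj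
      have h1 := i.pos
      have h2 : (i : ℕ) ≤ N :=
        le_trans (Finset.le_sup (f := fun i : ℕ+ => (i : ℕ)) hi)
          (Finset.le_sup (f := fun S : {S : Finset ℕ+ // S.card = k} =>
            S.1.sup fun i => (i : ℕ)) hS)
      exact mem_range.mpr (by omega)
    · rw [card_image_of_injective _ hinj, S.2]
  calc ∑ S ∈ W, ((∏ i ∈ S.1, ((i : ℕ) : ℝ)) ^ 2)⁻¹
      = ∑ S ∈ W, ∏ j ∈ S.1.image (fun i : ℕ+ => (i : ℕ) - 1), (((j : ℝ) + 1) ^ 2)⁻¹ := by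
        refine sum_congr rfl fun S _ => ?_
        rw [← f_eq (S.1.image fun i : ℕ+ => (i : ℕ) - 1), hud S.1]
    _ = ∑ A ∈ W.image (fun S : {S : Finset ℕ+ // S.card = k} =>
          S.1.image fun i : ℕ+ => (i : ℕ) - 1), ∏ j ∈ A, (((j : ℝ) + 1) ^ 2)⁻¹ := by
        rw [sum_image (by
          intro x _ y _ hxy
          apply Subtype.ext
          have := congrArg (Finset.image Nat.succPNat) hxy
          rwa [hud, hud] at this)]
    _ ≤ E k N := by
        refine sum_le_sum_of_subset_of_nonneg ?_ fun A _ _ => term_nonneg A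
        intro A hA
        obtain ⟨S, hS, rfl⟩ := mem_image.mp hA
        exact hdown S hS

lemma E_le_ell (k N : ℕ) : E k N ≤ ell k := by
  have h1 : ENNReal.ofReal (E k N) ≤ L k := le_iSup (fun N => ENNReal.ofReal (E k N)) N
  rw [← ofReal_ell k] at h1
  exact (ENNReal.ofReal_le_ofReal_iff (ell_nonneg k)).mp h1

end Stmt14

/-- For every `k ≥ 1`, the multiple zeta value `ζ({2}^k)` satisfies
`Σ_{n₁ > ⋯ > n_k ≥ 1} (n₁⋯n_k)^{-2} = π^{2k}/(2k+1)!`; strictly decreasing `k`-tuples of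
positive integers correspond exactly to finite sets of positive integers of cardinality
`k`, and the series converges. -/
theorem stmt14 (k : ℕ) (hk : 1 ≤ k) :
    HasSum
      (fun S : {S : Finset ℕ+ // S.card = k} => ((∏ i ∈ S.1, ((i : ℕ) : ℝ)) ^ 2)⁻¹)
      (Real.pi ^ (2 * k) / (Nat.factorial (2 * k + 1) : ℝ)) := by
  classical
  have hnn : ∀ S : {S : Finset ℕ+ // S.card = k},
      0 ≤ ((∏ i ∈ S.1, ((i : ℕ) : ℝ)) ^ 2)⁻¹ := fun S => by positivity
  have hlub : IsLUB (Set.range fun W : Finset {S : Finset ℕ+ // S.card = k} =>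
      ∑ S ∈ W, ((∏ i ∈ S.1, ((i : ℕ) : ℝ)) ^ 2)⁻¹) (Stmt14.ell k) := by
    constructor
    · rintro x ⟨W, rfl⟩
      obtain ⟨N, hNle⟩ := Stmt14.sum_le_E W
      exact hNle.trans (Stmt14.E_le_ell k N)
    · intro b hb
      have hbE : ∀ N, Stmt14.E k N ≤ b := fun N => by
        obtain ⟨W, hW⟩ := Stmt14.E_mem_range k N
        rw [← hW]
        exact hb ⟨W, rfl⟩
      have hb0 : 0 ≤ b := le_trans (Stmt14.E_nonneg k 0) (hbE 0)
      have hL : Stmt14.L k ≤ ENNReal.ofReal b :=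
        iSup_le fun N => ENNReal.ofReal_le_ofReal (hbE N)
      rw [← Stmt14.ofReal_ell k] at hL
      exact (ENNReal.ofReal_le_ofReal_iff hb0).mp hL
  have key := hasSum_of_isLUB_of_nonneg _ hnn hlub
  rwa [Stmt14.ell_eq k] at key
end

section
/- For all integers m ≥ 2 and n ≥ 2, log( Σ_{λ ∈ P_{mℕ}} n_λ^{−n} ) = Σ_{j≥1} ζ(nj) / ( j · m^{nj} ), where the sum on the left runs over all partitions (including the empty partition) whose parts are all positive multiples of m; equivalently, log ζ_{P_{mℕ}}(n) = n · Σ_{k≥2, n|k} ζ(k)/(k m^k). -/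
open Real

set_option maxHeartbeats 1000000

namespace Stmt16Aux

noncomputable def F (x : ℕ+ → ℝ) (l : Multiset ℕ+) : ℝ := (l.map x).prod

lemma F_nonneg {x : ℕ+ → ℝ} (hx0 : ∀ i, 0 ≤ x i) (l : Multiset ℕ+) : 0 ≤ F x l := by
  induction l using Multiset.induction_on with
  | empty => simp [F]
  | cons a t ih =>
    simp only [F, Multiset.map_cons, Multiset.prod_cons] at *
    exact mul_nonneg (hx0 a) ih

def insertEquiv (a : ℕ+) (s : Finset ℕ+) (ha : a ∉ s) :
    (ℕ × {l : Multiset ℕ+ // ∀ i ∈ l, i ∈ s}) ≃ {l : Multiset ℕ+ // ∀ i ∈ l, i ∈ insert a s} where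
  toFun p := ⟨Multiset.replicate p.1 a + p.2.1, by
    intro i hi
    rcases Multiset.mem_add.mp hi with h | h
    · rw [Multiset.eq_of_mem_replicate h]; exact Finset.mem_insert_self a s
    · exact Finset.mem_insert_of_mem (p.2.2 i h)⟩
  invFun l := (l.1.count a, ⟨l.1.filter (· ≠ a), by
    intro i hi
    rw [Multiset.mem_filter] at hi
    rcases Finset.mem_insert.mp (l.2 i hi.1) with h | h
    · exact absurd h hi.2
    · exact h⟩)
  left_inv p := by
    obtain ⟨k, l, hl⟩ := p
    have hal : a ∉ l := fun h => ha (hl a h)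
    refine Prod.ext ?_ (Subtype.ext ?_)
    · simp [Multiset.count_add, Multiset.count_replicate_self,
        Multiset.count_eq_zero_of_notMem hal]
    · simp only [Multiset.filter_add]
      rw [Multiset.filter_eq_nil.mpr, Multiset.filter_eq_self.mpr, zero_add]
      · intro i hi; exact fun h => hal (h ▸ hi)
      · intro i hi h
        exact absurd (Multiset.eq_of_mem_replicate hi) h
  right_inv l := by
    obtain ⟨l, hl⟩ := l
    refine Subtype.ext ?_
    have h1 : l.filter (· = a) = Multiset.replicate (l.count a) a := Multiset.filter_eq' l a
    have h2 := Multiset.filter_add_not (· = a) l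
    simp only []
    rw [← h1]
    convert h2 using 2

lemma hasSum_restrict {x : ℕ+ → ℝ} (hx0 : ∀ i, 0 ≤ x i) (hx1 : ∀ i, x i < 1) (s : Finset ℕ+) :
    HasSum (fun l : {l : Multiset ℕ+ // ∀ i ∈ l, i ∈ s} => F x l.1)
      (∏ i ∈ s, (1 - x i)⁻¹) := by
  induction s using Finset.induction_on with
  | empty =>
    have hzero : ∀ l : {l : Multiset ℕ+ // ∀ i ∈ l, i ∈ (∅ : Finset ℕ+)}, l.1 = 0 := fun l =>
      Multiset.eq_zero_of_forall_notMem fun i hi => by simpa using l.2 i hi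
    have h := hasSum_single (f := fun l : {l : Multiset ℕ+ // ∀ i ∈ l, i ∈ (∅ : Finset ℕ+)} =>
      F x l.1) ⟨0, by simp⟩ (fun b hb => absurd (Subtype.ext (hzero b)) hb)
    rw [Finset.prod_empty]
    simpa [F] using h
  | insert a s ha ih =>
    have hgeo := hasSum_geometric_of_lt_one (hx0 a) (hx1 a)
    have h1 : Summable (fun k : ℕ => x a ^ k) := hgeo.summable
    have h2 : Summable (fun l : {l : Multiset ℕ+ // ∀ i ∈ l, i ∈ s} => F x l.1) := ih.summable
    have hsummable : Summable (fun p : ℕ × {l : Multiset ℕ+ // ∀ i ∈ l, i ∈ s} =>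
        x a ^ p.1 * F x p.2.1) :=
      h1.mul_of_nonneg h2 (fun k => pow_nonneg (hx0 a) k)
        (fun l => F_nonneg hx0 _)
    have key := hgeo.mul ih hsummable
    rw [Finset.prod_insert ha]
    have hfun : (fun l : {l : Multiset ℕ+ // ∀ i ∈ l, i ∈ insert a s} => F x l.1) ∘
        (insertEquiv a s ha) = fun p => x a ^ p.1 * F x p.2.1 := by
      funext p
      simp [insertEquiv, F, Multiset.prod_replicate]
    exact (insertEquiv a s ha).hasSum_iff.mp (hfun ▸ key)

lemma F_def (x : ℕ+ → ℝ) (l : Multiset ℕ+) : F x l = (l.map x).prod := rfl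

lemma summable_neg_log {x : ℕ+ → ℝ} (hx0 : ∀ i, 0 ≤ x i) (hx2 : ∀ i, x i ≤ 1/2)
    (hxs : Summable x) : Summable (fun i => -Real.log (1 - x i)) := by
  have h1 : ∀ i, (0:ℝ) < 1 - x i := fun i => by have := hx2 i; linarith
  have ht0 : ∀ i, 0 ≤ -Real.log (1 - x i) := fun i => by
    have := Real.log_nonpos (x := 1 - x i) (by linarith [hx2 i]) (by linarith [hx0 i])
    linarith
  refine Summable.of_nonneg_of_le ht0 (fun i => ?_) (hxs.mul_left 2)
  have hlog : -Real.log (1 - x i) = Real.log (1 - x i)⁻¹ := by rw [Real.log_inv]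
  rw [hlog]
  have h2 : Real.log (1 - x i)⁻¹ ≤ (1 - x i)⁻¹ - 1 :=
    Real.log_le_sub_one_of_pos (inv_pos.mpr (h1 i))
  have h3 : (1 - x i)⁻¹ ≤ 1 + 2 * x i := by
    rw [inv_eq_one_div, div_le_iff₀ (h1 i)]
    nlinarith [hx0 i, hx2 i]
  linarith

lemma tsum_F_eq {x : ℕ+ → ℝ} (hx0 : ∀ i, 0 ≤ x i) (hx2 : ∀ i, x i ≤ 1/2) (hxs : Summable x) :
    ∑' l : Multiset ℕ+, F x l = Real.exp (∑' i, -Real.log (1 - x i)) := by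
  have hx1 : ∀ i, x i < 1 := fun i => lt_of_le_of_lt (hx2 i) (by norm_num)
  have h1 : ∀ i, (0:ℝ) < 1 - x i := fun i => by have := hx1 i; linarith
  have ht0 : ∀ i, 0 ≤ -Real.log (1 - x i) := fun i => by
    have := Real.log_nonpos (x := 1 - x i) (by linarith [hx2 i]) (by linarith [hx0 i])
    linarith
  have hts := summable_neg_log hx0 hx2 hxs
  set T := ∑' i, -Real.log (1 - x i) with hT
  have hprod : HasProd (fun i => (1 - x i)⁻¹) (Real.exp T) := by
    have h := hts.hasSum.rexp
    have hfun : (rexp ∘ fun i => -Real.log (1 - x i)) = fun i => (1 - x i)⁻¹ := by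
      funext i
      simp only [Function.comp_apply, Real.exp_neg, Real.exp_log (h1 i)]
    rwa [hfun] at h
  have bound1 : ∀ s : Finset ℕ+, ∏ i ∈ s, (1 - x i)⁻¹ ≤ Real.exp T := by
    intro s
    have : ∏ i ∈ s, (1 - x i)⁻¹ = Real.exp (∑ i ∈ s, -Real.log (1 - x i)) := by
      rw [Real.exp_sum]
      exact Finset.prod_congr rfl fun i _ => by
        rw [Real.exp_neg, Real.exp_log (h1 i)]
    rw [this]
    exact Real.exp_le_exp.mpr (Summable.sum_le_tsum s (fun i _ => ht0 i) hts)
  have bound2 : ∀ u : Finset (Multiset ℕ+), ∑ l ∈ u, F x l ≤ Real.exp T := by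
    intro u
    set s : Finset ℕ+ := u.sup Multiset.toFinset with hs
    have hmem : ∀ l ∈ u, ∀ i ∈ l, i ∈ s := fun l hl i hi =>
      Finset.mem_of_subset (Finset.le_sup hl) (Multiset.mem_toFinset.mpr hi)
    have R := hasSum_restrict hx0 hx1 s
    refine le_trans ?_ (bound1 s)
    have hinj : Function.Injective (fun l : {l : Multiset ℕ+ // l ∈ u} =>
        (⟨l.1, hmem l.1 l.2⟩ : {l : Multiset ℕ+ // ∀ i ∈ l, i ∈ s})) := by
      intro a b h
      have := congrArg Subtype.val h
      exact Subtype.ext this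
    have key : ∑ l ∈ u, F x l = ∑ l ∈ u.attach.map ⟨_, hinj⟩, F x l.1 := by
      rw [Finset.sum_map]
      simp only [Function.Embedding.coeFn_mk]
      exact (Finset.sum_attach u (F x)).symm
    rw [key]
    exact sum_le_hasSum _ (fun l _ => F_nonneg hx0 _) R
  have hsumF : Summable (F x) := summable_of_sum_le (fun l => F_nonneg hx0 l) bound2
  have le1 : ∑' l, F x l ≤ Real.exp T := Summable.tsum_le_of_sum_le hsumF bound2
  have le2 : Real.exp T ≤ ∑' l, F x l := by
    have hle : ∀ s : Finset ℕ+, ∏ i ∈ s, (1 - x i)⁻¹ ≤ ∑' l, F x l := by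
      intro s
      rw [← (hasSum_restrict hx0 hx1 s).tsum_eq]
      have := Summable.tsum_subtype_le (F x) {l : Multiset ℕ+ | ∀ i ∈ l, i ∈ s}
        (fun l => F_nonneg hx0 l) hsumF
      exact this
    exact le_of_tendsto hprod (Filter.Eventually.of_forall hle)
  exact le_antisymm le1 le2

end Stmt16Aux

open Stmt16Aux

/-- For all `m ≥ 2` and `n ≥ 2`,
`log( Σ_{λ ∈ P_{mℕ}} n_λ^{-n} ) = Σ_{j≥1} ζ(nj)/(j m^{nj})`, where the partition zeta sum
runs over all partitions whose parts are positive multiples of `m` (including the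
empty partition) and `ζ(nj) = Σ_{i≥1} i^{-nj}`. -/

theorem stmt16 (m n : ℕ) (hm : 2 ≤ m) (hn : 2 ≤ n) :
    Real.log
        (∑' l : {l : Multiset ℕ+ // ∀ x ∈ l, m ∣ (x : ℕ)}, ((normP l.1 : ℝ) ^ n)⁻¹) =
      ∑' j : ℕ+,
        (∑' i : ℕ+, (((i : ℕ) : ℝ) ^ (n * (j : ℕ)))⁻¹) /
          (((j : ℕ) : ℝ) * (m : ℝ) ^ (n * (j : ℕ))) := by
  have hm0 : 0 < m := by omega
  set c : ℕ+ := ⟨m, hm0⟩ with hc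
  set x : ℕ+ → ℝ := fun k => ((((c * k : ℕ+) : ℕ) : ℝ) ^ n)⁻¹ with hx
  -- basic bounds on x
  have hck : ∀ k : ℕ+, ((c * k : ℕ+) : ℕ) = m * (k : ℕ) := fun k => rfl
  have hck2 : ∀ k : ℕ+, 2 ≤ ((c * k : ℕ+) : ℕ) := by
    intro k
    rw [hck]
    calc 2 ≤ m := hm
    _ = m * 1 := (mul_one m).symm
    _ ≤ m * (k : ℕ) := Nat.mul_le_mul_left m k.one_le
  have hx0 : ∀ k, 0 ≤ x k := fun k => by positivity
  have hx2 : ∀ k, x k ≤ 1 / 2 := by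
    intro k
    have h2 : (2 : ℝ) ≤ (((c * k : ℕ+) : ℕ) : ℝ) ^ n := by
      calc (2:ℝ) = 2 ^ 1 := (pow_one 2).symm
      _ ≤ 2 ^ n := pow_le_pow_right₀ (by norm_num) (by omega)
      _ ≤ (((c * k : ℕ+) : ℕ) : ℝ) ^ n :=
          pow_le_pow_left₀ (by norm_num) (by exact_mod_cast hck2 k) n
    rw [hx, one_div]
    exact inv_anti₀ (by norm_num) h2
  have hx1 : ∀ k, x k < 1 := fun k => lt_of_le_of_lt (hx2 k) (by norm_num)
  have hxs : Summable x := by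
    have hbase : Summable (fun k : ℕ => ((k : ℝ) ^ 2)⁻¹) := by
      simpa using Real.summable_nat_pow_inv.mpr (by norm_num : 1 < 2)
    have hsub : Summable (fun k : ℕ+ => (((k : ℕ) : ℝ) ^ 2)⁻¹) :=
      hbase.comp_injective (fun a b h => PNat.coe_injective h)
    refine Summable.of_nonneg_of_le hx0 (fun k => ?_) hsub
    rw [hx]
    refine inv_anti₀ (by positivity) ?_
    have hnat : (k : ℕ) ^ 2 ≤ ((c * k : ℕ+) : ℕ) ^ n := by
      calc (k:ℕ)^2 ≤ (k:ℕ)^n := Nat.pow_le_pow_right k.one_le hn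
      _ ≤ ((c * k : ℕ+) : ℕ)^n := Nat.pow_le_pow_left (by rw [hck]; exact Nat.le_mul_of_pos_left _ hm0) n
    exact_mod_cast hnat
  -- reindex the partition sum
  have hinj : Function.Injective (fun k : ℕ+ => c * k) := mul_right_injective c
  have hsurj : ∀ l : Multiset ℕ+, (∀ i ∈ l, (m:ℕ) ∣ (i:ℕ)) →
      ∃ l₀ : Multiset ℕ+, l₀.map (fun k => c * k) = l := by
    intro l
    induction l using Multiset.induction_on with
    | empty => exact fun _ => ⟨0, by simp⟩
    | cons a t ih =>
      intro h
      obtain ⟨t₀, ht₀⟩ := ih (fun i hi => h i (Multiset.mem_cons_of_mem hi))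
      obtain ⟨d, hd⟩ := h a (Multiset.mem_cons_self a t)
      have hd0 : 0 < d := by
        rcases Nat.eq_zero_or_pos d with rfl | h0
        · exfalso
          exact a.pos.ne' (by simpa using hd)
        · exact h0
      refine ⟨Nat.toPNat d hd0 ::ₘ t₀, ?_⟩
      rw [Multiset.map_cons, ht₀]
      congr 1
      apply PNat.coe_injective
      exact hd.symm
  set Φfun : Multiset ℕ+ → {l : Multiset ℕ+ // ∀ x ∈ l, m ∣ (x : ℕ)} :=
    fun l => ⟨l.map (fun k => c * k), by
      intro i hi
      obtain ⟨k, _, hk⟩ := Multiset.mem_map.mp hi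
      exact ⟨(k:ℕ), by rw [← hk]; rfl⟩⟩ with hΦ
  have hbij : Function.Bijective Φfun := by
    constructor
    · intro a b h
      exact Multiset.map_injective hinj (congrArg Subtype.val h)
    · rintro ⟨l, hl⟩
      obtain ⟨l₀, hl₀⟩ := hsurj l hl
      exact ⟨l₀, Subtype.ext hl₀⟩
  set Φ : Multiset ℕ+ ≃ {l : Multiset ℕ+ // ∀ x ∈ l, m ∣ (x : ℕ)} := Equiv.ofBijective _ hbij
  have hFΦ : ∀ l : Multiset ℕ+, ((normP (Φ l).1 : ℝ) ^ n)⁻¹ = F x l := by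
    intro l
    rw [F_def]
    induction l using Multiset.induction_on with
    | empty => simp [normP, Φ, Equiv.ofBijective, Φfun]
    | cons a t ih =>
      have h1 : (Φ (a ::ₘ t)).1 = (c * a) ::ₘ (Φ t).1 := by
        simp [Φ, Equiv.ofBijective, Φfun]
      have h2 : (normP (Φ (a ::ₘ t)).1 : ℝ) = ((c * a : ℕ+) : ℕ) * (normP (Φ t).1 : ℝ) := by
        rw [h1]
        simp only [normP, Multiset.map_cons, Multiset.prod_cons]
        push_cast
        ring
      rw [h2, Multiset.map_cons, Multiset.prod_cons, ← ih, mul_pow, mul_inv]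
  have hreindex : (∑' l : {l : Multiset ℕ+ // ∀ x ∈ l, m ∣ (x : ℕ)}, ((normP l.1 : ℝ) ^ n)⁻¹)
      = ∑' l : Multiset ℕ+, F x l := by
    rw [← Φ.tsum_eq (fun l => ((normP l.1 : ℝ) ^ n)⁻¹)]
    exact tsum_congr hFΦ
  rw [hreindex, tsum_F_eq hx0 hx2 hxs, Real.log_exp]
  -- now compute ∑' i, -log (1 - x i)
  have hlog_i : ∀ i : ℕ+, HasSum (fun j : ℕ => x i ^ (j+1) / (j+1)) (-Real.log (1 - x i)) :=
    fun i => hasSum_pow_div_log_of_abs_lt_one (by rw [abs_of_nonneg (hx0 i)]; exact hx1 i)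
  have step1 : (∑' i : ℕ+, -Real.log (1 - x i)) = ∑' i : ℕ+, ∑' j : ℕ, x i ^ (j+1) / (j+1) :=
    tsum_congr fun i => ((hlog_i i).tsum_eq).symm
  -- summability on the product
  have hu_nonneg : ∀ p : ℕ+ × ℕ, 0 ≤ x p.1 ^ (p.2+1) / (p.2+1) := fun p => by positivity
  have hu_le : ∀ p : ℕ+ × ℕ, x p.1 ^ (p.2+1) / (p.2+1) ≤ x p.1 * (2⁻¹ : ℝ)^p.2 := by
    intro ⟨i, j⟩
    have h1 : x i ^ (j+1) ≤ x i * (2⁻¹:ℝ)^j := by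
      rw [pow_succ']
      refine mul_le_mul_of_nonneg_left ?_ (hx0 i)
      calc x i ^ j ≤ (1/2:ℝ)^j := pow_le_pow_left₀ (hx0 i) (hx2 i) j
      _ = (2⁻¹:ℝ)^j := by norm_num
    calc x i ^ (j+1) / ((j:ℝ)+1) ≤ x i ^ (j+1) :=
          div_le_self (by positivity) (by push_cast; linarith [Nat.cast_nonneg (α := ℝ) j])
    _ ≤ x i * (2⁻¹:ℝ)^j := h1
  have hsu : Summable (fun p : ℕ+ × ℕ => x p.1 ^ (p.2+1) / (p.2+1)) := by
    have hgeo : Summable (fun j : ℕ => (2⁻¹:ℝ)^j) :=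
      summable_geometric_of_lt_one (by norm_num) (by norm_num)
    have hmul : Summable (fun p : ℕ+ × ℕ => x p.1 * (2⁻¹:ℝ)^p.2) :=
      hxs.mul_of_nonneg hgeo hx0 (fun j => by positivity)
    exact Summable.of_nonneg_of_le hu_nonneg hu_le hmul
  -- swap the two sums
  have hswap : (∑' i : ℕ+, ∑' j : ℕ, x i ^ (j+1) / (j+1))
      = ∑' j : ℕ, ∑' i : ℕ+, x i ^ (j+1) / (j+1) := by
    have hcomp : (fun p : ℕ+ × ℕ => x p.1 ^ (p.2+1) / ((p.2:ℝ)+1)) ∘ (Equiv.prodComm ℕ ℕ+)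
        = fun q : ℕ × ℕ+ => x q.2 ^ (q.1+1) / ((q.1:ℝ)+1) := by
      funext q; rfl
    have hsu' : Summable (fun q : ℕ × ℕ+ => x q.2 ^ (q.1+1) / ((q.1:ℝ)+1)) := by
      rw [← hcomp]
      exact ((Equiv.prodComm ℕ ℕ+).summable_iff).mpr hsu
    rw [← Summable.tsum_prod hsu, ← Summable.tsum_prod hsu']
    exact ((Equiv.prodComm ℕ ℕ+).tsum_eq
      (fun p : ℕ+ × ℕ => x p.1 ^ (p.2+1) / ((p.2:ℝ)+1))).symm
  rw [step1, hswap]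
  -- reindex ℕ → ℕ+ and compute the inner sums
  rw [← Equiv.pnatEquivNat.symm.tsum_eq
    (fun j : ℕ+ => (∑' i : ℕ+, (((i : ℕ) : ℝ) ^ (n * (j : ℕ)))⁻¹) /
      (((j : ℕ) : ℝ) * (m : ℝ) ^ (n * (j : ℕ))))]
  refine tsum_congr fun j => ?_
  have hj : ((Equiv.pnatEquivNat.symm j : ℕ+) : ℕ) = j + 1 := rfl
  have hpt : ∀ i : ℕ+, x i ^ (j+1) / ((j:ℝ)+1)
      = (((i : ℕ) : ℝ) ^ (n * (j+1)))⁻¹ * (((m:ℝ) ^ (n * (j+1)))⁻¹ / ((j:ℝ)+1)) := by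
    intro i
    have hcast : ((((c * i : ℕ+) : ℕ) : ℝ)) = (m : ℝ) * ((i:ℕ) : ℝ) := by
      rw [hck]; push_cast; ring
    rw [hx]
    simp only []
    rw [inv_pow, ← pow_mul, hcast, mul_pow, mul_inv]
    ring
  calc (∑' i : ℕ+, x i ^ (j+1) / ((j:ℝ)+1))
      = ∑' i : ℕ+, (((i : ℕ) : ℝ) ^ (n * (j+1)))⁻¹ * (((m:ℝ) ^ (n * (j+1)))⁻¹ / ((j:ℝ)+1)) :=
        tsum_congr hpt
    _ = (∑' i : ℕ+, (((i : ℕ) : ℝ) ^ (n * (j+1)))⁻¹) * (((m:ℝ) ^ (n * (j+1)))⁻¹ / ((j:ℝ)+1)) :=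
        tsum_mul_right
    _ = (∑' i : ℕ+, (((i : ℕ) : ℝ) ^ (n * (j+1)))⁻¹) / (((j:ℝ)+1) * (m:ℝ) ^ (n * (j+1))) := by
        rw [mul_comm (((j:ℝ)+1))]
        field_simp
    _ = (∑' i : ℕ+, (((i:ℕ):ℝ) ^ (n * ((Equiv.pnatEquivNat.symm j : ℕ+) : ℕ)))⁻¹) /
          ((((Equiv.pnatEquivNat.symm j : ℕ+) : ℕ) : ℝ) *
            (m:ℝ) ^ (n * ((Equiv.pnatEquivNat.symm j : ℕ+) : ℕ))) := by
        rw [hj]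
        push_cast
        rfl
end
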